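/- arXiv:1801.08885 — 7 statements merged into one kernel-verified Lean document; each statement's English description precedes it below -/
import Mathlib

section
/- For 3/2 < s < 3 (so that 3/s > 1) and λ, λ' > 0, the limit as R → ∞ of (∫_0^R r²/(r^s+λ) dr − ∫_0^R r²/(r^s+λ') dr) equals (π/(s sin(3π/s))) (λ^{3/s−1} − λ'^{3/s−1}). -/
open MeasureTheory Real Filter

open Set Topology in
lemma aux_integrableOn {b : ℝ} (hb0 : 0 < b) (hb1 : b < 1) :
    IntegrableOn (fun u : ℝ => u ^ (b - 1) / (1 + u)) (Ioi 0) := by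
  have hmeas : Measurable (fun u : ℝ => u ^ (b - 1) / (1 + u)) :=
    (measurable_id.pow_const _).div (measurable_const.add measurable_id)
  rw [← Set.Ioc_union_Ioi_eq_Ioi (zero_le_one (α := ℝ))]
  refine IntegrableOn.union ?_ ?_
  · have hint : IntegrableOn (fun u : ℝ => u ^ (b - 1)) (Ioc 0 1) := by
      have := intervalIntegral.intervalIntegrable_rpow' (a := 0) (b := 1)
        (by linarith : (-1:ℝ) < b - 1)
      rwa [intervalIntegrable_iff_integrableOn_Ioc_of_le zero_le_one] at this
    refine MeasureTheory.Integrable.mono hint (hmeas.aestronglyMeasurable.restrict) ?_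
    filter_upwards [ae_restrict_mem measurableSet_Ioc] with u hu
    have hu0 : 0 < u := hu.1
    have h1 : (0:ℝ) < 1 + u := by linarith
    rw [Real.norm_eq_abs, Real.norm_eq_abs, abs_of_nonneg (by positivity),
      abs_of_nonneg (by positivity)]
    calc u ^ (b - 1) / (1 + u) ≤ u ^ (b - 1) / 1 := by
          apply div_le_div_of_nonneg_left (by positivity) one_pos (by linarith)
      _ = u ^ (b - 1) := by ring
  · have hint : IntegrableOn (fun u : ℝ => u ^ (b - 2)) (Ioi 1) :=
      integrableOn_Ioi_rpow_of_lt (by linarith) one_pos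
    refine MeasureTheory.Integrable.mono hint (hmeas.aestronglyMeasurable.restrict) ?_
    filter_upwards [ae_restrict_mem measurableSet_Ioi] with u hu
    have hu0 : (0:ℝ) < u := lt_trans one_pos hu
    have h1 : (0:ℝ) < 1 + u := by linarith
    rw [Real.norm_eq_abs, Real.norm_eq_abs, abs_of_nonneg (by positivity),
      abs_of_nonneg (by positivity)]
    calc u ^ (b - 1) / (1 + u) ≤ u ^ (b - 1) / u := by
          apply div_le_div_of_nonneg_left (by positivity) hu0 (by linarith)
      _ = u ^ (b - 2) := by
          rw [div_eq_mul_inv, ← Real.rpow_neg_one u, ← Real.rpow_add hu0]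
          norm_num
          ring_nf

open Set Topology in
lemma aux_value {b : ℝ} (hb0 : 0 < b) (hb1 : b < 1) :
    ∫ u in Ioi (0:ℝ), u ^ (b - 1) / (1 + u) = π / Real.sin (π * b) := by
  have hg := aux_integrableOn hb0 hb1
  have hFmeas : Measurable (fun p : ℝ × ℝ => p.1 ^ (b - 1) * Real.exp (-((1 + p.1) * p.2))) := by
    fun_prop
  have hinner : ∀ u : ℝ, 0 < u →
      (∫ t in Ioi (0:ℝ), u ^ (b - 1) * Real.exp (-((1 + u) * t))) = u ^ (b-1) / (1 + u) := by
    intro u hu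
    have h1u : (0:ℝ) < 1 + u := by linarith
    rw [MeasureTheory.integral_const_mul]
    have h2 : ∫ t in Ioi (0:ℝ), Real.exp (-((1+u)*t)) = 1/(1+u) := by
      have h3 := Real.integral_rpow_mul_exp_neg_mul_Ioi (a := 1) one_pos h1u
      simpa using h3
    rw [h2]; ring
  have hFint : Integrable
      (fun p : ℝ × ℝ => p.1 ^ (b - 1) * Real.exp (-((1 + p.1) * p.2)))
      ((volume.restrict (Ioi 0)).prod (volume.restrict (Ioi 0))) := by
    rw [MeasureTheory.integrable_prod_iff hFmeas.aestronglyMeasurable]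
    constructor
    · filter_upwards [ae_restrict_mem measurableSet_Ioi] with u hu
      have hu' : (0:ℝ) < u := hu
      have h1u : (0:ℝ) < 1 + u := by linarith
      have hI := (exp_neg_integrableOn_Ioi (0:ℝ) h1u).const_mul (u ^ (b-1))
      convert hI using 3
      · rfl
      ring
    · apply hg.congr
      filter_upwards [ae_restrict_mem measurableSet_Ioi] with u hu
      have hu0 : (0:ℝ) < u := hu
      rw [← hinner u hu0]
      refine (setIntegral_congr_fun measurableSet_Ioi (fun t _ => ?_)).symm
      rw [Real.norm_of_nonneg (by positivity)]
  have hswap := MeasureTheory.integral_integral_swap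
    (f := fun u t => u ^ (b - 1) * Real.exp (-((1 + u) * t))) hFint
  have hL : (∫ u in Ioi (0:ℝ), ∫ t in Ioi (0:ℝ), u ^ (b - 1) * Real.exp (-((1 + u) * t)))
      = ∫ u in Ioi (0:ℝ), u ^ (b-1) / (1+u) :=
    setIntegral_congr_fun measurableSet_Ioi (fun u hu => hinner u hu)
  have hR : (∫ t in Ioi (0:ℝ), ∫ u in Ioi (0:ℝ), u ^ (b - 1) * Real.exp (-((1 + u) * t)))
      = Real.Gamma b * Real.Gamma (1-b) := by
    have hR1 : ∀ t : ℝ, t ∈ Ioi (0:ℝ) →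
        (∫ u in Ioi (0:ℝ), u ^ (b - 1) * Real.exp (-((1 + u) * t)))
          = Real.Gamma b * (t ^ ((1-b)-1) * Real.exp (-(1*t))) := by
      intro t ht
      have ht0 : (0:ℝ) < t := ht
      have step : (∫ u in Ioi (0:ℝ), u ^ (b - 1) * Real.exp (-((1 + u) * t)))
          = ∫ u in Ioi (0:ℝ), Real.exp (-t) * (u ^ (b-1) * Real.exp (-(t*u))) := by
        refine setIntegral_congr_fun measurableSet_Ioi (fun u _ => ?_)
        rw [show -((1+u)*t) = -t + -(t*u) by ring, Real.exp_add]
        ring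
      rw [step, MeasureTheory.integral_const_mul,
        Real.integral_rpow_mul_exp_neg_mul_Ioi hb0 ht0]
      rw [one_div, Real.inv_rpow ht0.le, ← Real.rpow_neg ht0.le]
      rw [show ((1:ℝ)-b)-1 = -b by ring, one_mul]
      ring
    rw [setIntegral_congr_fun measurableSet_Ioi hR1, MeasureTheory.integral_const_mul,
      Real.integral_rpow_mul_exp_neg_mul_Ioi (a := 1-b) (by linarith) one_pos]
    simp
  rw [← hL, hswap, hR, Real.Gamma_mul_Gamma_one_sub]

open Set Topology intervalIntegral in
lemma aux_subst {s lam : ℝ} (hs1 : 1 < s) (hs3 : s < 3) (hlam : 0 < lam) {R : ℝ} (hR : 0 ≤ R) :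
    ∫ r in (0:ℝ)..R, r ^ 2 / (r ^ s + lam)
      = ∫ u in (0:ℝ)..(R ^ s / lam),
          lam ^ (3/s - 1) / s * (u ^ (3/s - 1) / (1 + u)) := by
  have hs0 : s ≠ 0 := by linarith
  set b : ℝ := 3/s - 1 with hb
  set f : ℝ → ℝ := fun r => r ^ s / lam with hf
  set f' : ℝ → ℝ := fun r => s * r ^ (s-1) / lam with hf'
  set g : ℝ → ℝ := fun u => lam ^ b / s * (u ^ b / (1 + u)) with hg
  have hb0 : 0 ≤ b := by
    have : 1 < 3 / s := (one_lt_div (by linarith)).mpr (by linarith)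
    simp only [hb]; linarith
  have hderiv : ∀ x ∈ uIcc (0:ℝ) R, HasDerivAt f (f' x) x := by
    intro x _
    exact (Real.hasDerivAt_rpow_const (Or.inr hs1.le)).div_const lam
  have hcont : ContinuousOn f' (uIcc (0:ℝ) R) := by
    apply ContinuousOn.div_const
    apply continuousOn_const.mul
    intro x _
    exact (Real.continuousAt_rpow_const x (s-1) (Or.inr (by linarith))).continuousWithinAt
  have himg : f '' (uIcc (0:ℝ) R) ⊆ Ici 0 := by
    rintro _ ⟨x, hx, rfl⟩
    rw [uIcc_of_le hR] at hx
    exact div_nonneg (Real.rpow_nonneg hx.1 s) hlam.le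
  have hgcont : ContinuousOn g (f '' (uIcc (0:ℝ) R)) := by
    refine ContinuousOn.mono ?_ himg
    apply continuousOn_const.mul
    apply ContinuousOn.div
    · intro u hu
      exact (Real.continuousAt_rpow_const u b (Or.inr hb0)).continuousWithinAt
    · fun_prop
    · intro u hu
      have h0u : (0:ℝ) ≤ u := hu
      positivity
  have key := intervalIntegral.integral_comp_smul_deriv' hderiv hcont hgcont
  have hf0 : f 0 = 0 := by
    simp only [hf]
    rw [Real.zero_rpow hs0, zero_div]
  rw [hf0] at key
  rw [← key]
  apply intervalIntegral.integral_congr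
  intro x hx
  rw [uIcc_of_le hR] at hx
  rcases eq_or_lt_of_le hx.1 with h0 | hxpos
  · simp only [← h0, hf, hf', hg, Function.comp, smul_eq_mul]
    rw [Real.zero_rpow hs0, Real.zero_rpow ((by linarith : (0:ℝ) < s - 1).ne')]
    norm_num
  · simp only [hf, hf', hg, Function.comp, smul_eq_mul]
    have hxs : (0:ℝ) < x ^ s := Real.rpow_pos_of_pos hxpos s
    have hlb : (0:ℝ) < lam ^ b := Real.rpow_pos_of_pos hlam b
    rw [Real.div_rpow hxs.le hlam.le, ← Real.rpow_mul hxpos.le,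
      show s * b = 3 - s by rw [hb]; field_simp]
    have h1 : 1 + x ^ s / lam = (x ^ s + lam) / lam := by field_simp; ring
    rw [h1]
    have hAB : x ^ (s-1) * x ^ (3-s) = x ^ 2 := by
      rw [← Real.rpow_add hxpos]
      norm_num
    field_simp
    linear_combination (-1) * hAB

open Set Topology in
lemma aux_decomp {b : ℝ} (hb0 : 0 < b) (hb1 : b < 1) {T : ℝ} (hT : 0 ≤ T) :
    ∫ u in (0:ℝ)..T, u ^ b / (1 + u)
      = T ^ b / b - ∫ u in (0:ℝ)..T, u ^ (b-1) / (1 + u) := by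
  have h1 : IntervalIntegrable (fun u : ℝ => u ^ (b-1)) volume 0 T :=
    intervalIntegral.intervalIntegrable_rpow' (by linarith)
  have h2 : IntervalIntegrable (fun u : ℝ => u ^ (b-1) / (1 + u)) volume 0 T := by
    rw [intervalIntegrable_iff_integrableOn_Ioc_of_le hT] at h1 ⊢
    refine MeasureTheory.Integrable.mono h1 ?_ ?_
    · exact (((measurable_id.pow_const _).div
        (measurable_const.add measurable_id)).aestronglyMeasurable).restrict
    · filter_upwards [ae_restrict_mem measurableSet_Ioc] with u hu
      have hu0 : 0 < u := hu.1
      have h1u : (0:ℝ) < 1 + u := by linarith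
      rw [Real.norm_eq_abs, Real.norm_eq_abs, abs_of_nonneg (by positivity),
        abs_of_nonneg (by positivity)]
      calc u ^ (b - 1) / (1 + u) ≤ u ^ (b - 1) / 1 :=
            div_le_div_of_nonneg_left (by positivity) one_pos (by linarith)
        _ = u ^ (b - 1) := by ring
  have key : ∫ u in (0:ℝ)..T, u ^ b / (1+u)
      = ∫ u in (0:ℝ)..T, (u ^ (b-1) - u ^ (b-1)/(1+u)) := by
    apply intervalIntegral.integral_congr
    intro u hu
    rw [uIcc_of_le hT] at hu
    simp only []
    rcases eq_or_lt_of_le hu.1 with h0 | hpos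
    · rw [← h0]
      rw [Real.zero_rpow hb0.ne', Real.zero_rpow (by linarith : b - 1 ≠ 0)]
      norm_num
    · have h1u : (0:ℝ) < 1 + u := by linarith
      have hub : u ^ b = u ^ (b-1) * u := by
        nth_rewrite 1 [show b = (b-1) + 1 by ring]
        rw [Real.rpow_add_one hpos.ne']
      rw [hub]
      field_simp
      ring
  rw [key, intervalIntegral.integral_sub h1 h2,
    integral_rpow (Or.inl (by linarith : (-1:ℝ) < b - 1))]
  rw [Real.zero_rpow (by linarith : b - 1 + 1 ≠ 0)]
  norm_num

/-- For `3/2 < s < 3` and `λ, λ' > 0`, the difference of the truncated integrals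
`∫_0^R r²/(r^s+λ) dr − ∫_0^R r²/(r^s+λ') dr` converges, as `R → ∞`, to
`(π/(s sin(3π/s))) (λ^{3/s−1} − λ'^{3/s−1})`. -/
theorem tendsto_diff_truncated_integrals (s lam lam' : ℝ)
    (hs : 3 / 2 < s) (hs3 : s < 3) (hlam : 0 < lam) (hlam' : 0 < lam') :
    Tendsto (fun R : ℝ =>
        (∫ r in (0:ℝ)..R, r ^ 2 / (r ^ s + lam)) -
          ∫ r in (0:ℝ)..R, r ^ 2 / (r ^ s + lam'))
      atTop
      (nhds ((π / (s * Real.sin (3 * π / s))) *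
        (lam ^ (3 / s - 1) - lam' ^ (3 / s - 1)))) := by
  have hs0 : (0:ℝ) < s := by linarith
  have hs1 : (1:ℝ) < s := by linarith
  set b : ℝ := 3 / s - 1 with hb
  have hb0 : 0 < b := by
    have : 1 < 3 / s := (one_lt_div hs0).mpr (by linarith)
    rw [hb]; linarith
  have hb1 : b < 1 := by
    have : 3 / s < 2 := (div_lt_iff₀ hs0).mpr (by linarith)
    rw [hb]; linarith
  clear_value b
  set C : ℝ := ∫ u in Set.Ioi (0:ℝ), u ^ (b - 1) / (1 + u) with hC
  set H : ℝ → ℝ := fun T => ∫ u in (0:ℝ)..T, u ^ (b-1) / (1 + u) with hH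
  have hdiff : ∀ R : ℝ, 0 ≤ R →
      (∫ r in (0:ℝ)..R, r ^ 2 / (r ^ s + lam)) - (∫ r in (0:ℝ)..R, r ^ 2 / (r ^ s + lam'))
      = lam' ^ b / s * H (R ^ s / lam') - lam ^ b / s * H (R ^ s / lam) := by
    intro R hR
    have hRs : (0:ℝ) ≤ R ^ s := Real.rpow_nonneg hR s
    rw [aux_subst hs1 hs3 hlam hR, aux_subst hs1 hs3 hlam' hR,
      intervalIntegral.integral_const_mul, intervalIntegral.integral_const_mul, ← hb]
    rw [aux_decomp hb0 hb1 (by positivity : (0:ℝ) ≤ R ^ s / lam),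
      aux_decomp hb0 hb1 (by positivity : (0:ℝ) ≤ R ^ s / lam')]
    have e1 : lam ^ b * ((R ^ s / lam) ^ b) = (R ^ s) ^ b := by
      rw [Real.div_rpow hRs hlam.le]
      field_simp
    have e2 : lam' ^ b * ((R ^ s / lam') ^ b) = (R ^ s) ^ b := by
      rw [Real.div_rpow hRs hlam'.le]
      field_simp
    rw [hH]
    linear_combination (1 / (s * b)) * e1 - (1 / (s * b)) * e2
  have hC1 : Tendsto H atTop (nhds C) :=
    intervalIntegral_tendsto_integral_Ioi 0 (aux_integrableOn hb0 hb1) tendsto_id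
  have hsR : ∀ c : ℝ, 0 < c → Tendsto (fun R : ℝ => R ^ s / c) atTop atTop :=
    fun c hc => (tendsto_rpow_atTop hs0).atTop_div_const hc
  have hlim : Tendsto (fun R : ℝ => lam' ^ b / s * H (R ^ s / lam') - lam ^ b / s * H (R ^ s / lam))
      atTop (nhds (lam' ^ b / s * C - lam ^ b / s * C)) :=
    ((hC1.comp (hsR lam' hlam')).const_mul _).sub ((hC1.comp (hsR lam hlam)).const_mul _)
  have hval : (π / (s * Real.sin (3 * π / s))) * (lam ^ b - lam' ^ b)
      = lam' ^ b / s * C - lam ^ b / s * C := by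
    rw [hC, aux_value hb0 hb1, hb,
      show π * (3 / s - 1) = 3 * π / s - π by ring, Real.sin_sub_pi]
    rw [div_neg]
    ring
  rw [hval]
  apply hlim.congr'
  filter_upwards [eventually_ge_atTop (0:ℝ)] with R hR
  exact (hdiff R hR).symm
end

section
/- For s > 1 and λ > 0, the integral over ℝ of 1/(|p|^s + λ) dp equals 2π / (λ^{1−1/s} s sin(π/s)). -/
open MeasureTheory Real Set

-- Step 1: real Beta with v = 1 - u over Ioo 0 1
lemma beta_real (a : ℝ) (ha : 0 < a) (ha1 : a < 1) :
    ∫ t in Ioo (0:ℝ) 1, t ^ (a - 1) * (1 - t) ^ (-a) = π / Real.sin (π * a) := by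
  have h1 : (Complex.betaIntegral a (1 - a)) =
      ((∫ t in Ioo (0:ℝ) 1, t ^ (a - 1) * (1 - t) ^ (-a) : ℝ) : ℂ) := by
    rw [Complex.betaIntegral, intervalIntegral.integral_of_le zero_le_one,
      MeasureTheory.integral_Ioc_eq_integral_Ioo]
    calc ∫ x in Ioo (0:ℝ) 1, (x:ℂ) ^ ((a:ℂ) - 1) * (1 - (x:ℂ)) ^ ((1:ℂ) - a - 1)
        = ∫ x in Ioo (0:ℝ) 1, ((x ^ (a - 1) * (1 - x) ^ (-a) : ℝ) : ℂ) := by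
          refine setIntegral_congr_fun measurableSet_Ioo fun x hx => ?_
          have hx0 : (0:ℝ) < x := hx.1
          have hx1 : (0:ℝ) ≤ 1 - x := by linarith [hx.2]
          rw [Complex.ofReal_mul, Complex.ofReal_cpow hx0.le, Complex.ofReal_cpow hx1]
          push_cast
          ring_nf
      _ = _ := integral_ofReal
  have h2 := Complex.Gamma_mul_Gamma_eq_betaIntegral (s := a) (t := 1 - a)
    (by simpa using ha) (by simp; linarith)
  rw [show (a : ℂ) + (1 - a) = 1 by ring, Complex.Gamma_one, one_mul] at h2
  have h3 := Complex.Gamma_mul_Gamma_one_sub (a : ℂ)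
  rw [h3, h1] at h2
  have := h2.symm
  rw [show ((π : ℝ) : ℂ) * a = ((π * a : ℝ) : ℂ) by push_cast; ring,
    ← Complex.ofReal_sin, ← Complex.ofReal_div] at this
  exact_mod_cast this

-- Step 2: ∫ x in Ioi 0, x^(a-1)/(1+x) = π / sin (π a)
lemma mellin_one_div_one_add (a : ℝ) (ha : 0 < a) (ha1 : a < 1) :
    ∫ x in Ioi (0:ℝ), x ^ (a - 1) / (1 + x) = π / Real.sin (π * a) := by
  have himg : (fun t : ℝ => t / (1 - t)) '' Ioo 0 1 = Ioi 0 := by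
    ext y
    constructor
    · rintro ⟨t, ht, rfl⟩
      exact div_pos ht.1 (by linarith [ht.2])
    · intro hy
      refine ⟨y / (1 + y), ⟨div_pos hy (by linarith [mem_Ioi.mp hy]), ?_⟩, ?_⟩
      · rw [div_lt_one (by linarith [mem_Ioi.mp hy])]; linarith [mem_Ioi.mp hy]
      · have hy' : (0:ℝ) < y := hy
        field_simp
        ring
  have hderiv : ∀ t ∈ Ioo (0:ℝ) 1, HasDerivWithinAt (fun t : ℝ => t / (1 - t))
      (1 / (1 - t) ^ 2) (Ioo 0 1) t := by
    intro t ht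
    have h1t : (1:ℝ) - t ≠ 0 := by have := ht.2; intro h; linarith [sub_eq_zero.mp h]
    have := (hasDerivAt_id t).div ((hasDerivAt_id t).const_sub 1) h1t
    exact (this.congr_deriv (by simp only [id]; ring)).hasDerivWithinAt
  have hinj : InjOn (fun t : ℝ => t / (1 - t)) (Ioo 0 1) := by
    intro x hx y hy h
    have hx1 : (1:ℝ) - x ≠ 0 := by have := hx.2; intro hc; linarith [sub_eq_zero.mp hc]
    have hy1 : (1:ℝ) - y ≠ 0 := by have := hy.2; intro hc; linarith [sub_eq_zero.mp hc]
    field_simp at h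
    nlinarith [h]
  have key := integral_image_eq_integral_abs_deriv_smul measurableSet_Ioo hderiv hinj
    (fun x => x ^ (a - 1) / (1 + x))
  rw [himg] at key
  rw [key, ← beta_real a ha ha1]
  refine setIntegral_congr_fun measurableSet_Ioo fun t ht => ?_
  have ht0 : (0:ℝ) < t := ht.1
  have h1t : (0:ℝ) < 1 - t := by linarith [ht.2]
  have h1 : (1:ℝ) + t / (1 - t) = 1 / (1 - t) := by field_simp; ring
  rw [smul_eq_mul, h1, div_rpow ht0.le h1t.le, abs_of_pos (by positivity)]
  rw [div_div_eq_mul_div, div_one, one_div, show ((1:ℝ)-t)^(2:ℕ) = (1-t)^(((2:ℕ)):ℝ) from (rpow_natCast _ 2).symm]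
  rw [show -a = 1 + (-(((2:ℕ)):ℝ)) + (-(a-1)) by push_cast; ring]
  rw [rpow_add h1t, rpow_add h1t, rpow_one, rpow_neg h1t.le, rpow_neg h1t.le]
  ring

/-- For `s > 1` and `λ > 0`, `∫_ℝ 1/(|p|^s + λ) dp = 2π / (λ^{1−1/s} s sin(π/s))`. -/
theorem integral_one_div_abs_rpow_add (s lam : ℝ) (hs : 1 < s) (hlam : 0 < lam) :
    ∫ p : ℝ, 1 / (|p| ^ s + lam) =
      2 * π / (lam ^ (1 - 1 / s) * s * Real.sin (π / s)) := by
  have hs0 : (0:ℝ) < s := lt_trans one_pos hs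
  have ha : (0:ℝ) < 1 / s := by positivity
  have ha1 : 1 / s < 1 := by rw [div_lt_one hs0]; exact hs
  -- Step A
  have key1 : s * ∫ x in Ioi (0:ℝ), 1 / (x ^ s + 1) = π / Real.sin (π / s) := by
    have h := integral_comp_rpow_Ioi_of_pos (g := fun y => y ^ (1 / s - 1) / (1 + y)) hs0
    rw [mellin_one_div_one_add (1/s) ha ha1, mul_one_div] at h
    rw [← h, ← MeasureTheory.integral_const_mul]
    refine (setIntegral_congr_fun measurableSet_Ioi fun x hx => ?_).symm
    have hx0 : (0:ℝ) < x := hx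
    have h1 : (x ^ s) ^ (1/s - 1) = x ^ (1 - s) := by
      rw [← Real.rpow_mul hx0.le, show s * (1/s - 1) = 1 - s by field_simp]
    have h2 : x ^ (s-1) * x ^ (1-s) = 1 := by rw [← Real.rpow_add hx0]; norm_num
    rw [smul_eq_mul]
    rw [h1]
    calc s * x ^ (s-1) * (x ^ (1-s) / (1 + x ^ s))
        = s * (x ^ (s-1) * x ^ (1-s)) / (1 + x ^ s) := by ring
      _ = s * (1 / (x ^ s + 1)) := by rw [h2, add_comm]; ring
  -- Step B : scaling
  set c : ℝ := lam ^ (1/s) with hc_def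
  have hc : 0 < c := Real.rpow_pos_of_pos hlam _
  have hcs : c ^ s = lam := by
    rw [hc_def, ← Real.rpow_mul hlam.le, one_div_mul_cancel hs0.ne', Real.rpow_one]
  have key2 : ∫ p in Ioi (0:ℝ), 1 / (p ^ s + lam)
      = c * ((1/lam) * ∫ x in Ioi (0:ℝ), 1 / (x ^ s + 1)) := by
    have h := integral_comp_mul_left_Ioi (fun p => 1 / (p ^ s + lam)) 0 hc
    rw [mul_zero] at h
    have h2 : ∫ x in Ioi (0:ℝ), 1 / ((c * x) ^ s + lam)
        = (1/lam) * ∫ x in Ioi (0:ℝ), 1 / (x ^ s + 1) := by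
      rw [← MeasureTheory.integral_const_mul]
      refine setIntegral_congr_fun measurableSet_Ioi fun x hx => ?_
      have hx0 : (0:ℝ) < x := hx
      rw [Real.mul_rpow hc.le hx0.le, hcs]
      have hxs : (0:ℝ) < x ^ s := Real.rpow_pos_of_pos hx0 _
      field_simp
    rw [h2] at h
    rw [smul_eq_mul] at h
    field_simp at h ⊢
    linarith [h]
  -- assemble
  rw [integral_comp_abs (f := fun x => 1 / (x ^ s + lam)), key2]
  have hsin : 0 < Real.sin (π / s) := Real.sin_pos_of_pos_of_lt_pi (by positivity)
    (by rw [div_lt_iff₀ hs0]; nlinarith [Real.pi_pos])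
  have hint : ∫ x in Ioi (0:ℝ), 1 / (x ^ s + 1) = π / (s * Real.sin (π / s)) := by
    field_simp at key1 ⊢
    linarith [key1]
  rw [hint]
  have hll : c * lam ^ (1 - 1/s) = lam := by
    rw [hc_def, ← Real.rpow_add hlam]; norm_num
  have hl1 : lam ^ (1 - 1/s) ≠ 0 := (Real.rpow_pos_of_pos hlam _).ne'
  have hll2 : c * lam ^ ((s - 1) / s) = lam := by
    rw [sub_div, div_self hs0.ne']; exact hll
  field_simp
  linear_combination hll2
end

section
/- For s > 1 and λ > 0, the integral over ℝ of 1/(|p|^s + λ)² dp equals 2π(s−1) / (λ^{2−1/s} s² sin(π/s)). -/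
open MeasureTheory Real Set

private lemma aux_key (s lam : ℝ) (hs : 1 < s) (hlam : 0 < lam) :
    ∫ x in Ioi (0:ℝ), 1 / (x ^ s + lam) ^ 2 =
      Real.Gamma (1/s + 1) * (lam ^ (-(2 - 1/s)) * Real.Gamma (2 - 1/s)) := by
  have hs0 : (0:ℝ) < s := lt_trans zero_lt_one hs
  have hinvs : (0:ℝ) < 1/s := by positivity
  have hinvs1 : 1/s < 1 := by
    rw [div_lt_one hs0]; exact hs
  -- key step 1: for x > 0, ofReal (1/(x^s+lam)^2) = ∫⁻ t in Ioi 0, ofReal (t * exp(-(x^s+lam)*t))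
  have step1 : ∀ b : ℝ, 0 < b →
      ENNReal.ofReal (1 / b ^ 2) =
        ∫⁻ t in Ioi (0:ℝ), ENNReal.ofReal (t * Real.exp (-b * t)) := by
    intro b hb
    have hint : IntegrableOn (fun t : ℝ => t * Real.exp (-b * t)) (Ioi 0) := by
      have := integrableOn_rpow_mul_exp_neg_mul_rpow (p := 1) (s := 1) (b := b)
        (by norm_num) zero_lt_one hb
      simpa using this
    rw [← MeasureTheory.ofReal_integral_eq_lintegral_ofReal hint]
    · congr 1
      have := integral_rpow_mul_exp_neg_mul_rpow (p := 1) (q := 1) (b := b)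
        zero_lt_one (by norm_num) hb
      simp only [Real.rpow_one] at this
      rw [this]
      norm_num [Real.Gamma_two]
    · filter_upwards [ae_restrict_mem measurableSet_Ioi] with t ht
      have : (0:ℝ) < t := ht
      positivity
  -- measurability of the 2-variable kernel
  have hmeas : AEMeasurable (Function.uncurry fun x t : ℝ =>
      ENNReal.ofReal (t * Real.exp (-(x ^ s + lam) * t)))
      ((volume.restrict (Ioi 0)).prod (volume.restrict (Ioi 0))) := by
    apply Measurable.aemeasurable
    apply ENNReal.measurable_ofReal.comp
    apply Measurable.mul measurable_snd
    apply Real.measurable_exp.comp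
    have h1 : Measurable fun x : ℝ => x ^ s :=
      (Real.continuous_rpow_const hs0.le).measurable
    exact (((h1.comp measurable_fst).add_const lam).neg.mul measurable_snd)
  -- main lintegral computation
  have hC1 : 0 ≤ Real.Gamma (1/s + 1) := Real.Gamma_nonneg_of_nonneg (by positivity)
  have hC2 : 0 ≤ lam ^ (-(2 - 1/s)) * Real.Gamma (2 - 1/s) := by
    have := Real.Gamma_nonneg_of_nonneg (show (0:ℝ) ≤ 2 - 1/s by linarith)
    positivity
  have main : ∫⁻ x in Ioi (0:ℝ), ENNReal.ofReal (1 / (x ^ s + lam) ^ 2) =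
      ENNReal.ofReal (Real.Gamma (1/s + 1) * (lam ^ (-(2 - 1/s)) * Real.Gamma (2 - 1/s))) := by
    calc
      ∫⁻ x in Ioi (0:ℝ), ENNReal.ofReal (1 / (x ^ s + lam) ^ 2)
          = ∫⁻ x in Ioi (0:ℝ), ∫⁻ t in Ioi (0:ℝ),
              ENNReal.ofReal (t * Real.exp (-(x ^ s + lam) * t)) := by
            refine setLIntegral_congr_fun measurableSet_Ioi ?_
            intro x hx
            exact step1 _ (by have := Real.rpow_nonneg hx.le s; positivity)
      _ = ∫⁻ t in Ioi (0:ℝ), ∫⁻ x in Ioi (0:ℝ),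
              ENNReal.ofReal (t * Real.exp (-(x ^ s + lam) * t)) :=
            lintegral_lintegral_swap hmeas
      _ = ∫⁻ t in Ioi (0:ℝ), ENNReal.ofReal
            (Real.Gamma (1/s + 1) * (t ^ (1 - 1/s) * Real.exp (-lam * t))) := by
            refine setLIntegral_congr_fun measurableSet_Ioi ?_
            intro t ht
            dsimp only
            have ht' : (0:ℝ) < t := ht
            have hrw : ∀ x ∈ Ioi (0:ℝ), ENNReal.ofReal (t * Real.exp (-(x ^ s + lam) * t))
                = ENNReal.ofReal (t * Real.exp (-lam * t)) * ENNReal.ofReal (Real.exp (-t * x ^ s)) := by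
              intro x hx
              rw [← ENNReal.ofReal_mul (by positivity)]
              congr 1
              rw [mul_assoc, ← Real.exp_add]
              ring_nf
            rw [setLIntegral_congr_fun measurableSet_Ioi hrw,
              lintegral_const_mul' _ _ ENNReal.ofReal_ne_top]
            have hint : IntegrableOn (fun x : ℝ => Real.exp (-t * x ^ s)) (Ioi 0) := by
              have h0 := integrableOn_rpow_mul_exp_neg_mul_rpow (p := s) (s := 0) (b := t)
                (by norm_num) hs0 ht'
              refine h0.congr_fun (fun x hx => ?_) measurableSet_Ioi
              show x ^ (0:ℝ) * _ = _
              rw [Real.rpow_zero, one_mul]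
            rw [← MeasureTheory.ofReal_integral_eq_lintegral_ofReal hint
              (Filter.Eventually.of_forall fun x => (Real.exp_pos _).le),
              integral_exp_neg_mul_rpow hs0 ht',
              ← ENNReal.ofReal_mul (by positivity)]
            congr 1
            have hexp : t ^ (1 - 1/s) = t * t ^ (-1/s) := by
              rw [show (1:ℝ) - 1/s = 1 + -1/s by ring, Real.rpow_add ht', Real.rpow_one]
            rw [hexp]
            ring
      _ = ENNReal.ofReal (Real.Gamma (1/s + 1) * (lam ^ (-(2 - 1/s)) * Real.Gamma (2 - 1/s))) := by
            have h2 : ∀ t ∈ Ioi (0:ℝ),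
                ENNReal.ofReal (Real.Gamma (1/s + 1) * (t ^ (1 - 1/s) * Real.exp (-lam * t)))
                  = ENNReal.ofReal (Real.Gamma (1/s + 1)) *
                      ENNReal.ofReal (t ^ (1 - 1/s) * Real.exp (-lam * t)) := by
              intro t ht
              exact ENNReal.ofReal_mul hC1
            rw [setLIntegral_congr_fun measurableSet_Ioi h2,
              lintegral_const_mul' _ _ ENNReal.ofReal_ne_top]
            have hint2 : IntegrableOn (fun t : ℝ => t ^ (1 - 1/s) * Real.exp (-lam * t)) (Ioi 0) := by
              have := integrableOn_rpow_mul_exp_neg_mul_rpow (p := 1) (s := 1 - 1/s) (b := lam)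
                (by linarith) zero_lt_one hlam
              simpa using this
            rw [← MeasureTheory.ofReal_integral_eq_lintegral_ofReal hint2 ?_,
              ← ENNReal.ofReal_mul hC1]
            · congr 2
              have := integral_rpow_mul_exp_neg_mul_rpow (p := 1) (q := 1 - 1/s) (b := lam)
                zero_lt_one (by linarith) hlam
              simp only [Real.rpow_one] at this
              rw [this, show -(1 - 1/s + 1)/1 = -(2 - 1/s) by ring,
                show (1 - 1/s + 1)/1 = 2 - 1/s by ring]
              ring
            · filter_upwards [ae_restrict_mem measurableSet_Ioi] with t ht
              have ht' : (0:ℝ) < t := ht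
              positivity
  -- convert back to a Bochner integral
  have hmeas2 : AEStronglyMeasurable (fun x : ℝ => 1 / (x ^ s + lam) ^ 2)
      (volume.restrict (Ioi 0)) := by
    apply Measurable.aestronglyMeasurable
    exact (measurable_const.div ((((Real.continuous_rpow_const hs0.le).measurable).add_const lam).pow_const 2))
  rw [MeasureTheory.integral_eq_lintegral_of_nonneg_ae ?_ hmeas2]
  · rw [main, ENNReal.toReal_ofReal (by positivity)]
  · filter_upwards [ae_restrict_mem measurableSet_Ioi] with x hx
    have hx' : (0:ℝ) < x := hx
    have := Real.rpow_nonneg hx'.le s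
    positivity

/-- For `s > 1` and `λ > 0`,
`∫_ℝ 1/(|p|^s + λ)² dp = 2π(s−1) / (λ^{2−1/s} s² sin(π/s))`. -/
theorem integral_one_div_abs_rpow_add_sq (s lam : ℝ) (hs : 1 < s) (hlam : 0 < lam) :
    ∫ p : ℝ, 1 / (|p| ^ s + lam) ^ 2 =
      2 * π * (s - 1) / (lam ^ (2 - 1 / s) * s ^ 2 * Real.sin (π / s)) := by
  have h1 : (∫ p : ℝ, 1 / (|p| ^ s + lam) ^ 2)
      = 2 * ∫ x in Ioi (0:ℝ), 1 / (x ^ s + lam) ^ 2 :=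
    integral_comp_abs (f := fun x => 1 / (x ^ s + lam) ^ 2)
  rw [h1, aux_key s lam hs hlam]
  have hs0 : (0:ℝ) < s := lt_trans zero_lt_one hs
  have hinvs : (0:ℝ) < 1/s := by positivity
  have hGa : Real.Gamma (1/s + 1) = (1/s) * Real.Gamma (1/s) := Real.Gamma_add_one hinvs.ne'
  have hGb : Real.Gamma (2 - 1/s) = (1 - 1/s) * Real.Gamma (1 - 1/s) := by
    rw [show (2:ℝ) - 1/s = (1 - 1/s) + 1 by ring,
      Real.Gamma_add_one (show (1:ℝ) - 1/s ≠ 0 by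
        have h : 1/s < 1 := by rw [div_lt_one hs0]; exact hs
        linarith)]
  have key : Real.Gamma (1/s) * Real.Gamma (1 - 1/s) = π / Real.sin (π/s) := by
    have := Real.Gamma_mul_Gamma_one_sub (1/s)
    rwa [mul_one_div] at this
  have hsin : 0 < Real.sin (π/s) :=
    Real.sin_pos_of_pos_of_lt_pi (by positivity) (div_lt_self Real.pi_pos hs)
  have hlpow : lam ^ (-(2 - 1/s)) = (lam ^ (2 - 1/s))⁻¹ := Real.rpow_neg hlam.le _
  have hlne : lam ^ (2 - 1/s) ≠ 0 := (Real.rpow_pos_of_pos hlam _).ne'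
  rw [hGa, hGb, hlpow]
  have : 2 * (1/s * Real.Gamma (1/s) * ((lam ^ (2 - 1/s))⁻¹ * ((1 - 1/s) * Real.Gamma (1 - 1/s))))
      = (Real.Gamma (1/s) * Real.Gamma (1 - 1/s)) * (2 * (1/s) * (1 - 1/s) * (lam ^ (2 - 1/s))⁻¹) := by
    ring
  rw [this, key]
  field_simp
end

section
/- For s > d and λ > 0, the function G_{s,λ} on ℝ^d with Fourier transform (2π)^{−d/2}(|p|^s+λ)^{−1} is continuous at 0 with G_{s,λ}(0) = (2^{d−1} π^{d/2−1} Γ(d/2) λ^{(s−d)/s} s sin(πd/s))^{−1}. -/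
open MeasureTheory Real Set


lemma mellin_inv_one_add {a : ℝ} (h0 : 0 < a) (h1 : a < 1) :
    ∫ x in Ioi (0:ℝ), x ^ (a - 1) / (1 + x) = π / Real.sin (π * a) := by
  have hbeta : Complex.betaIntegral ↑a (1 - ↑a) = ((π / Real.sin (π * a) : ℝ) : ℂ) := by
    have h := Complex.Gamma_mul_Gamma_eq_betaIntegral (s := (a:ℂ)) (t := 1 - (a:ℂ))
      (by simpa using h0) (by simp [Complex.sub_re]; linarith)
    rw [add_sub_cancel, Complex.Gamma_one, one_mul] at h
    rw [← h, Complex.Gamma_mul_Gamma_one_sub]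
    push_cast
    simp
  have hB : Complex.betaIntegral ↑a (1 - ↑a)
      = ((∫ t in Ioo (0:ℝ) 1, t ^ (a - 1) * (1 - t) ^ (-a) : ℝ) : ℂ) := by
    rw [Complex.betaIntegral, intervalIntegral.integral_of_le zero_le_one,
      integral_Ioc_eq_integral_Ioo]
    refine (_root_.integral_ofReal.symm.trans <|
      setIntegral_congr_fun measurableSet_Ioo fun t ht => ?_).symm
    obtain ⟨ht0, ht1⟩ := ht
    show ((t ^ (a - 1) * (1 - t) ^ (-a) : ℝ) : ℂ) = _
    rw [Complex.ofReal_mul, Complex.ofReal_cpow ht0.le, Complex.ofReal_cpow (by linarith)]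
    push_cast
    ring_nf
  have hreal : (∫ t in Ioo (0:ℝ) 1, t ^ (a - 1) * (1 - t) ^ (-a) : ℝ)
      = π / Real.sin (π * a) := by
    have := hB.symm.trans hbeta
    exact_mod_cast this
  -- change of variables x ↦ x / (1 + x)
  have himg : (fun x : ℝ => x / (1 + x)) '' Ioi 0 = Ioo (0:ℝ) 1 := by
    ext t
    constructor
    · rintro ⟨x, hx, rfl⟩
      have hx0 : (0:ℝ) < x := hx
      constructor
      · positivity
      · rw [div_lt_one (by linarith)]; linarith
    · rintro ⟨ht0, ht1⟩
      have h1t : (0:ℝ) < 1 - t := by linarith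
      refine ⟨t / (1 - t), by simp only [Set.mem_Ioi]; positivity, ?_⟩
      field_simp; ring
  have hderiv : ∀ x ∈ Ioi (0:ℝ), HasDerivWithinAt (fun x : ℝ => x / (1 + x))
      (((1 + x) ^ 2)⁻¹) (Ioi 0) x := by
    intro x hx
    have hx0 : (0:ℝ) < x := hx
    have h := (hasDerivAt_id x).div ((hasDerivAt_id x).const_add 1) (by positivity)
    refine h.hasDerivWithinAt.congr_deriv ?_
    simp only [id]; field_simp; ring
  have hinj : InjOn (fun x : ℝ => x / (1 + x)) (Ioi 0) := by
    intro x hx y hy hxy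
    have hx0 : (0:ℝ) < x := hx
    have hy0 : (0:ℝ) < y := hy
    field_simp at hxy
    linarith
  have hcv := integral_image_eq_integral_abs_deriv_smul measurableSet_Ioi hderiv hinj
    (fun t => t ^ (a - 1) * (1 - t) ^ (-a))
  rw [himg, hreal] at hcv
  rw [hcv]
  refine (setIntegral_congr_fun measurableSet_Ioi fun x hx => ?_)
  have hx0 : (0:ℝ) < x := hx
  have h1x : (0:ℝ) < 1 + x := by linarith
  have h1 : 1 - x / (1 + x) = (1 + x)⁻¹ := by field_simp; ring
  have h2 : (x / (1 + x)) ^ (a - 1) = x ^ (a - 1) * ((1 + x) ^ (a - 1))⁻¹ := by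
    rw [Real.div_rpow hx0.le h1x.le, div_eq_mul_inv]
  have h3 : ((1 + x)⁻¹) ^ (-a) = (1 + x) ^ a := by
    rw [Real.inv_rpow h1x.le, ← Real.rpow_neg h1x.le, neg_neg]
  have h4 : ((1 + x) ^ (2:ℕ) : ℝ) = (1 + x) ^ (2:ℝ) := by
    rw [← Real.rpow_natCast]; norm_num
  rw [smul_eq_mul, h1, h2, h3, h4, abs_of_pos (by positivity)]
  rw [← Real.rpow_neg h1x.le, ← Real.rpow_neg h1x.le]
  rw [div_eq_mul_inv, ← Real.rpow_neg_one]
  rw [show (x ^ (a-1) * (1 + x) ^ (-(a-1)) * (1+x)^a : ℝ) = x^(a-1) * ((1+x)^(-(a-1)) * (1+x)^a) by ring,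
    ← Real.rpow_add h1x]
  rw [show (-(a-1)+a : ℝ) = 1 by ring, Real.rpow_one]
  have h5 := Real.rpow_add h1x (-2) 1
  norm_num at h5
  rw [h5, Real.rpow_neg h1x.le]; norm_num; ring

lemma radial_integral {d : ℕ} (hd : 1 ≤ d) {s lam : ℝ} (hs : (d:ℝ) < s) (hlam : 0 < lam) :
    ∫ r in Ioi (0:ℝ), r ^ (d - 1) * (r ^ s + lam)⁻¹
      = lam ^ ((d:ℝ)/s - 1) / s * (π / Real.sin (π * ((d:ℝ)/s))) := by
  have hd1 : (1:ℝ) ≤ (d:ℝ) := by exact_mod_cast hd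
  have hs0 : (0:ℝ) < s := by linarith
  have h0 : 0 < (d:ℝ)/s := by positivity
  have h1 : (d:ℝ)/s < 1 := (div_lt_one hs0).mpr hs
  -- substitution x ↦ (lam * x) ^ (1/s)
  have himg : (fun x : ℝ => (lam * x) ^ (1/s)) '' Ioi 0 = Ioi (0:ℝ) := by
    ext r
    constructor
    · rintro ⟨x, hx, rfl⟩
      have hx0 : (0:ℝ) < x := hx
      exact Real.rpow_pos_of_pos (by positivity) _
    · intro hr
      have hr0 : (0:ℝ) < r := hr
      refine ⟨r ^ s / lam, by simp only [Set.mem_Ioi]; positivity, ?_⟩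
      show (lam * (r ^ s / lam)) ^ (1/s) = r
      rw [mul_div_cancel₀ _ hlam.ne', ← Real.rpow_mul hr0.le, mul_one_div,
        div_self hs0.ne', Real.rpow_one]
  have hderiv : ∀ x ∈ Ioi (0:ℝ), HasDerivWithinAt (fun x : ℝ => (lam * x) ^ (1/s))
      ((1/s) * (lam * x) ^ (1/s - 1) * lam) (Ioi 0) x := by
    intro x hx
    have hx0 : (0:ℝ) < x := hx
    have h := (Real.hasDerivAt_rpow_const (x := lam * x) (p := 1/s)
      (Or.inl (by positivity))).comp x ((hasDerivAt_id x).const_mul lam)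
    simpa [mul_comm, mul_assoc, Function.comp_def] using h.hasDerivWithinAt
  have hinj : InjOn (fun x : ℝ => (lam * x) ^ (1/s)) (Ioi 0) := by
    intro x hx y hy hxy
    have hx0 : (0:ℝ) < x := hx
    have hy0 : (0:ℝ) < y := hy
    simp only at hxy
    have e : ∀ z : ℝ, 0 < z → ((z) ^ (1/s)) ^ s = z := fun z hz => by
      rw [← Real.rpow_mul hz.le, one_div_mul_cancel hs0.ne', Real.rpow_one]
    have h2 : lam * x = lam * y := by
      have h3 := congrArg (fun t : ℝ => t ^ s) hxy
      rw [e (lam*x) (by positivity), e (lam*y) (by positivity)] at h3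
      exact h3
    exact mul_left_cancel₀ hlam.ne' h2
  have hcv := integral_image_eq_integral_abs_deriv_smul measurableSet_Ioi hderiv hinj
    (fun r => r ^ (d - 1) * (r ^ s + lam)⁻¹)
  rw [himg] at hcv
  rw [hcv]
  have hpoint : ∀ x ∈ Ioi (0:ℝ),
      |(1/s) * (lam * x) ^ (1/s - 1) * lam| •
        (((lam * x) ^ (1/s)) ^ (d - 1) * ((((lam * x) ^ (1/s)) ^ s + lam))⁻¹)
      = lam ^ ((d:ℝ)/s - 1) / s * (x ^ ((d:ℝ)/s - 1) / (1 + x)) := by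
    intro x hx
    have hx0 : (0:ℝ) < x := hx
    have hu : (0:ℝ) < lam * x := by positivity
    have e1 : ((lam * x) ^ (1/s)) ^ s = lam * x := by
      rw [← Real.rpow_mul hu.le, one_div_mul_cancel hs0.ne', Real.rpow_one]
    have e2 : ((lam * x) ^ (1/s)) ^ (d - 1) = (lam * x) ^ (((d:ℝ) - 1)/s) := by
      rw [← Real.rpow_natCast ((lam * x) ^ (1/s)) (d - 1), ← Real.rpow_mul hu.le]
      congr 1
      rw [Nat.cast_sub hd]
      push_cast
      ring
    rw [smul_eq_mul, e1, e2, abs_of_pos (by positivity)]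
    rw [show lam * x + lam = lam * (1 + x) by ring, mul_inv]
    rw [show (1/s) * (lam * x) ^ (1/s - 1) * lam * ((lam * x) ^ (((d:ℝ) - 1)/s) * (lam⁻¹ * (1 + x)⁻¹))
        = (1/s) * ((lam * x) ^ (1/s - 1) * (lam * x) ^ (((d:ℝ) - 1)/s)) * (lam * lam⁻¹) * (1 + x)⁻¹ by ring]
    rw [← Real.rpow_add hu, mul_inv_cancel₀ hlam.ne', mul_one]
    rw [show 1/s - 1 + ((d:ℝ) - 1)/s = (d:ℝ)/s - 1 by field_simp; ring]
    rw [Real.mul_rpow hlam.le hx0.le]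
    ring
  rw [setIntegral_congr_fun measurableSet_Ioi hpoint, integral_const_mul,
    mellin_inv_one_add h0 h1]

lemma integrable_inv_rpow_add {d : ℕ} (hd : 1 ≤ d) {s lam : ℝ} (hs : (d:ℝ) < s)
    (hlam : 0 < lam) :
    Integrable (fun p : EuclideanSpace ℝ (Fin d) => (‖p‖ ^ s + lam)⁻¹) := by
  have hd1 : (1:ℝ) ≤ (d:ℝ) := by exact_mod_cast hd
  have hs0 : (0:ℝ) < s := by linarith
  have hnr : (Module.finrank ℝ (EuclideanSpace ℝ (Fin d)) : ℝ) < s := by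
    rwa [finrank_euclideanSpace_fin]
  set C : ℝ := (min lam 1)⁻¹ * 2 ^ s with hC
  have hmin : (0:ℝ) < min lam 1 := lt_min hlam one_pos
  refine ((integrable_one_add_norm hnr).const_mul C).mono' ?_ ?_
  · refine Continuous.aestronglyMeasurable ?_
    refine Continuous.inv₀ ?_ fun p => by positivity
    exact (continuous_norm.rpow_const fun p => Or.inr hs0.le).add continuous_const
  · refine Filter.Eventually.of_forall fun p => ?_
    set t : ℝ := ‖p‖ with ht
    have ht0 : 0 ≤ t := norm_nonneg p
    have ha : (0:ℝ) < t ^ s + lam := by positivity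
    have hb : (0:ℝ) < (1 + t) ^ s := by positivity
    have key : (1 + t) ^ s ≤ C * (t ^ s + lam) := by
      have h1 : (1 + t) ^ s ≤ 2 ^ s * (1 + t ^ s) := by
        have hmax : (1 + t) ≤ 2 * max 1 t := by
          rcases le_total 1 t with h | h
          · rw [max_eq_right h]; linarith
          · rw [max_eq_left h]; linarith
        calc (1 + t) ^ s ≤ (2 * max 1 t) ^ s :=
              Real.rpow_le_rpow (by linarith) hmax hs0.le
          _ = 2 ^ s * (max 1 t) ^ s := Real.mul_rpow (by norm_num) (le_max_of_le_left zero_le_one)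
          _ ≤ 2 ^ s * (1 + t ^ s) := by
              gcongr
              rcases le_total 1 t with h | h
              · rw [max_eq_right h]
                have := Real.rpow_nonneg ht0 s
                nlinarith [Real.rpow_le_rpow ht0 (le_refl t) hs0.le]
              · rw [max_eq_left h, Real.one_rpow]
                have := Real.rpow_nonneg ht0 s
                linarith
      have h2 : min lam 1 * (1 + t ^ s) ≤ t ^ s + lam := by
        have hm1 : min lam 1 ≤ lam := min_le_left _ _
        have hm2 : min lam 1 ≤ 1 := min_le_right _ _
        have := Real.rpow_nonneg ht0 s
        nlinarith
      calc (1 + t) ^ s ≤ 2 ^ s * (1 + t ^ s) := h1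
        _ ≤ 2 ^ s * ((min lam 1)⁻¹ * (t ^ s + lam)) := by
            gcongr
            rw [le_inv_mul_iff₀ hmin]
            linarith [h2]
        _ = C * (t ^ s + lam) := by rw [hC]; ring
    have : ((1 + t) ^ s)⁻¹ ≤ ((1+t)^s)⁻¹ := le_refl _
    rw [norm_inv, Real.norm_eq_abs, abs_of_pos ha]
    rw [show C * (1 + ‖p‖) ^ (-s) = C * ((1 + t) ^ s)⁻¹ by rw [Real.rpow_neg (by linarith)]]
    rw [← div_eq_mul_inv, le_div_iff₀ hb, inv_mul_eq_div, div_le_iff₀ ha]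
    linarith [key]

set_option maxHeartbeats 1000000 in
lemma total_integral (d : ℕ) (hd : 1 ≤ d) (s lam : ℝ) (hs : (d:ℝ) < s) (hlam : 0 < lam) :
    (2 * π) ^ (-(d:ℝ)) * ∫ p : EuclideanSpace ℝ (Fin d), (‖p‖ ^ s + lam)⁻¹
      = (2 ^ ((d:ℝ) - 1) * π ^ ((d:ℝ) / 2 - 1) * Real.Gamma ((d:ℝ) / 2) *
          lam ^ ((s - (d:ℝ)) / s) * s * Real.sin (π * d / s))⁻¹ := by
  have hd1 : (1:ℝ) ≤ (d:ℝ) := by exact_mod_cast hd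
  have hs0 : (0:ℝ) < s := by linarith
  haveI : Nonempty (Fin d) := Fin.pos_iff_nonempty.mp hd
  haveI : Nontrivial (EuclideanSpace ℝ (Fin d)) := inferInstance
  have hmain := integral_fun_norm_addHaar (volume : Measure (EuclideanSpace ℝ (Fin d)))
    (fun r : ℝ => (r ^ s + lam)⁻¹)
  rw [finrank_euclideanSpace_fin] at hmain
  have hball : ((volume : Measure (EuclideanSpace ℝ (Fin d))) (Metric.ball 0 1)).toReal
      = Real.sqrt π ^ d / Real.Gamma ((d:ℝ)/2 + 1) := by
    rw [EuclideanSpace.volume_ball (Fin d) 0 1, Fintype.card_fin]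
    simp only [ENNReal.ofReal_one, one_pow, one_mul]
    rw [ENNReal.toReal_ofReal (by positivity)]
  have hrad := radial_integral hd hs hlam
  simp only [smul_eq_mul, nsmul_eq_mul] at hmain
  rw [measureReal_def, hball] at hmain
  have hmain2 : ∫ p : EuclideanSpace ℝ (Fin d), (‖p‖ ^ s + lam)⁻¹
      = (d:ℝ) * (Real.sqrt π ^ d / Real.Gamma ((d:ℝ)/2 + 1)) *
        (lam ^ ((d:ℝ)/s - 1) / s * (π / Real.sin (π * ((d:ℝ)/s)))) := by
    rw [hmain, ← hrad]
    ring
  rw [hmain2]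
  -- arithmetic
  have hπ := Real.pi_pos
  have hsin : 0 < Real.sin (π * d / s) := by
    apply Real.sin_pos_of_pos_of_lt_pi
    · positivity
    · rw [mul_div_assoc]
      nlinarith [(div_lt_one hs0).mpr hs]
  have hG : 0 < Real.Gamma ((d:ℝ)/2) := Real.Gamma_pos_of_pos (by positivity)
  have f1 : Real.sqrt π ^ d = π ^ ((d:ℝ)/2 - 1) * π := by
    rw [Real.sqrt_eq_rpow, ← Real.rpow_natCast (π ^ ((1:ℝ)/2)) d, ← Real.rpow_mul hπ.le,
      ← Real.rpow_add_one (ne_of_gt hπ)]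
    congr 1; ring
  have f2 : Real.Gamma ((d:ℝ)/2 + 1) = ((d:ℝ)/2) * Real.Gamma ((d:ℝ)/2) :=
    Real.Gamma_add_one (by positivity)
  have f3 : lam ^ ((d:ℝ)/s - 1) = (lam ^ ((s - (d:ℝ))/s))⁻¹ := by
    rw [← Real.rpow_neg hlam.le]
    congr 1; field_simp; ring
  have g1 : (2 * π) ^ (-(d:ℝ)) = 2 ^ (-(d:ℝ)) * π ^ (-(d:ℝ)) :=
    Real.mul_rpow (by norm_num) hπ.le
  have gB : (2:ℝ) ^ (-(d:ℝ)) = (2 ^ ((d:ℝ) - 1) * 2)⁻¹ := by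
    rw [← Real.rpow_add_one (by norm_num : (2:ℝ) ≠ 0), Real.rpow_neg (by norm_num)]
    congr 2; ring
  have gA : π ^ (-(d:ℝ)) = ((π ^ ((d:ℝ)/2 - 1)) ^ 2 * π ^ 2)⁻¹ := by
    rw [← Real.rpow_natCast (π ^ ((d:ℝ)/2 - 1)) 2, ← Real.rpow_mul hπ.le,
      ← Real.rpow_natCast π 2, ← Real.rpow_add hπ, Real.rpow_neg hπ.le]
    congr 2
    push_cast; ring
  have hsd : π * d / s = π * ((d:ℝ)/s) := by ring
  rw [g1, gB, gA, f1, f2, f3, hsd]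
  have hT : (0:ℝ) < 2 ^ ((d:ℝ) - 1) := Real.rpow_pos_of_pos (by norm_num) _
  have hP : (0:ℝ) < π ^ ((d:ℝ)/2 - 1) := Real.rpow_pos_of_pos hπ _
  have hL : (0:ℝ) < lam ^ ((s - (d:ℝ))/s) := Real.rpow_pos_of_pos hlam _
  have hd0 : (0:ℝ) < (d:ℝ) := by linarith
  rw [hsd] at hsin
  set T : ℝ := 2 ^ ((d:ℝ) - 1) with hTd
  set P : ℝ := π ^ ((d:ℝ)/2 - 1) with hPd
  set B : ℝ := Real.Gamma ((d:ℝ)/2) with hBd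
  set L : ℝ := lam ^ ((s - (d:ℝ))/s) with hLd
  set S : ℝ := Real.sin (π * ((d:ℝ)/s)) with hSd
  field_simp

/-- For `s > d` and `λ > 0`, the function
`G_{s,λ}(x) = (2π)^{−d} ∫_{ℝ^d} e^{i x·p} (|p|^s+λ)^{−1} dp` is continuous at `0` with
`G_{s,λ}(0) = (2^{d−1} π^{d/2−1} Γ(d/2) λ^{(s−d)/s} s sin(πd/s))^{−1}`. -/
theorem Gslam_continuousAt_zero (d : ℕ) (hd : 1 ≤ d) (s lam : ℝ)
    (hs : (d : ℝ) < s) (hlam : 0 < lam) :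
    ContinuousAt (fun x : EuclideanSpace ℝ (Fin d) =>
      ((2 * π) ^ (-(d:ℝ)) : ℝ) •
        ∫ p : EuclideanSpace ℝ (Fin d),
          Complex.exp (Complex.I * ((inner ℝ x p : ℝ) : ℂ)) / ((‖p‖ ^ s + lam : ℝ) : ℂ))
      (0 : EuclideanSpace ℝ (Fin d)) ∧
    ((2 * π) ^ (-(d:ℝ)) : ℝ) •
        (∫ p : EuclideanSpace ℝ (Fin d),
          Complex.exp (Complex.I * ((inner ℝ (0 : EuclideanSpace ℝ (Fin d)) p : ℝ) : ℂ)) /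
            ((‖p‖ ^ s + lam : ℝ) : ℂ))
      = (((2 ^ ((d:ℝ) - 1) * π ^ ((d:ℝ) / 2 - 1) * Real.Gamma ((d:ℝ) / 2) *
          lam ^ ((s - (d:ℝ)) / s) * s * Real.sin (π * d / s))⁻¹ : ℝ) : ℂ) := by
  have hd1 : (1:ℝ) ≤ (d:ℝ) := by exact_mod_cast hd
  have hs0 : (0:ℝ) < s := by linarith
  have hpos : ∀ p : EuclideanSpace ℝ (Fin d), (0:ℝ) < ‖p‖ ^ s + lam := fun p => by positivity
  have hnorm : ∀ (x p : EuclideanSpace ℝ (Fin d)),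
      ‖Complex.exp (Complex.I * ((inner ℝ x p : ℝ) : ℂ)) / ((‖p‖ ^ s + lam : ℝ) : ℂ)‖
        = (‖p‖ ^ s + lam)⁻¹ := by
    intro x p
    rw [norm_div, Complex.norm_exp,
      Complex.norm_real, Real.norm_eq_abs, abs_of_pos (hpos p)]
    simp [Complex.mul_re]
  constructor
  · refine ContinuousAt.const_smul ?_ ((2 * π) ^ (-(d:ℝ)) : ℝ)
    apply continuousAt_of_dominated (bound := fun p => (‖p‖ ^ s + lam)⁻¹)
    · refine Filter.Eventually.of_forall fun x => Continuous.aestronglyMeasurable ?_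
      apply Continuous.div
      · exact Complex.continuous_exp.comp <| continuous_const.mul <|
          Complex.continuous_ofReal.comp <| (continuous_const.inner continuous_id)
      · exact Complex.continuous_ofReal.comp <|
          ((continuous_norm.rpow_const fun p => Or.inr hs0.le).add continuous_const)
      · exact fun p => Complex.ofReal_ne_zero.mpr (hpos p).ne'
    · exact Filter.Eventually.of_forall fun x =>
        Filter.Eventually.of_forall fun p => le_of_eq (hnorm x p)
    · exact integrable_inv_rpow_add hd hs hlam
    · refine Filter.Eventually.of_forall fun p => ?_
      apply ContinuousAt.div
      · exact (Complex.continuous_exp.comp <| continuous_const.mul <|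
          Complex.continuous_ofReal.comp <| (continuous_id.inner continuous_const)).continuousAt
      · exact continuousAt_const
      · exact Complex.ofReal_ne_zero.mpr (hpos p).ne'
  · have hzero : ∀ p : EuclideanSpace ℝ (Fin d),
        Complex.exp (Complex.I * ((inner ℝ (0 : EuclideanSpace ℝ (Fin d)) p : ℝ) : ℂ)) /
          ((‖p‖ ^ s + lam : ℝ) : ℂ) = (((‖p‖ ^ s + lam)⁻¹ : ℝ) : ℂ) := by
      intro p
      rw [inner_zero_left]
      simp [Complex.ofReal_inv, one_div]
    simp only [hzero]
    have hcast : ∫ p : EuclideanSpace ℝ (Fin d), (((‖p‖ ^ s + lam)⁻¹ : ℝ) : ℂ)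
        = ((∫ p : EuclideanSpace ℝ (Fin d), (‖p‖ ^ s + lam)⁻¹ : ℝ) : ℂ) :=
      _root_.integral_ofReal
    rw [hcast, Complex.real_smul, ← Complex.ofReal_mul,
      ← total_integral d hd s lam hs hlam]
end

section
/- For s ∈ (3/2, 5/2) and λ > 0, if u ∈ L²(ℝ³) satisfies ∫_{ℝ³} û(p)(|p|^s+λ) f̂(p) dp = 0 for all f ∈ H^s(ℝ³) with ∫ f̂ = 0, then û(p) = c/(|p|^s+λ) for some constant c ∈ ℂ. In other words, the orthogonal complement in L²(ℝ³) of the range of (k̊^{(s/2)} + λ) is one-dimensional, spanned by G_{s,λ}. -/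
open MeasureTheory Real Set ENNReal

noncomputable section GreenAux

local notation "E3" => EuclideanSpace ℝ (Fin 3)

private lemma integrable_of_ball_support {F : Type*} [NormedAddCommGroup F]
    {f : E3 → F} (hf : AEStronglyMeasurable f volume)
    {R C : ℝ} (hsupp : ∀ p, p ∉ Metric.ball (0:E3) R → f p = 0)
    (hbdd : ∀ p, ‖f p‖ ≤ C) : Integrable f volume := by
  have hfi : f = (Metric.ball (0:E3) R).indicator f :=
    (Set.indicator_eq_self.2 (Function.support_subset_iff'.2 hsupp)).symm
  rw [hfi, integrable_indicator_iff measurableSet_ball]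
  exact Measure.integrableOn_of_bounded measure_ball_lt_top.ne hf
    (ae_of_all _ hbdd)

private lemma integrableOn_g {s lam : ℝ} (hs : 0 < s) (hlam : 0 < lam)
    (v : E3 → ℂ) (hv : MemLp v 2 volume)
    {A : Set E3} (hA : MeasurableSet A) {R : ℝ} (hAR : A ⊆ Metric.ball 0 R) :
    IntegrableOn (fun p : E3 => v p * ((‖p‖ ^ s + lam : ℝ) : ℂ)) A volume := by
  haveI : Fact (volume A < ∞) := ⟨lt_of_le_of_lt (measure_mono hAR) measure_ball_lt_top⟩
  have h1 : Integrable v (volume.restrict A) := (hv.restrict A).integrable (by norm_num)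
  have hX : Continuous fun p : E3 => ((‖p‖ ^ s + lam : ℝ) : ℂ) :=
    Complex.continuous_ofReal.comp
      ((continuous_norm.rpow_const fun _ => Or.inr hs.le).add continuous_const)
  have hb : ∀ᵐ p ∂(volume.restrict A), ‖((‖p‖ ^ s + lam : ℝ) : ℂ)‖ ≤ |R| ^ s + lam := by
    filter_upwards [ae_restrict_mem hA] with p hp
    have hpR : ‖p‖ ≤ |R| := le_trans (mem_ball_zero_iff.1 (hAR hp)).le (le_abs_self R)
    have h0 : (0:ℝ) ≤ ‖p‖ ^ s + lam := by positivity
    rw [Complex.norm_real, Real.norm_eq_abs, abs_of_nonneg h0]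
    exact add_le_add (Real.rpow_le_rpow (norm_nonneg p) hpR hs.le) le_rfl
  exact (h1.bdd_mul hX.aestronglyMeasurable hb).congr (ae_of_all _ fun p => mul_comm _ _)

private lemma indicator_pkg {s : ℝ} (hs : 0 < s)
    {A : Set E3} (hA : MeasurableSet A) {R : ℝ} (hAR : A ⊆ Metric.ball 0 R) (z : ℂ) :
    Integrable (A.indicator fun _ => z) := by
  refine (integrable_indicator_iff hA).2 (integrableOn_const ?_)
  exact (lt_of_le_of_lt (measure_mono hAR) measure_ball_lt_top).ne

private lemma weight_pkg {s : ℝ} (hs : 0 < s) {w : E3 → ℂ} (hw : Measurable w)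
    {R C : ℝ} (hR : 0 ≤ R) (hsupp : ∀ p, p ∉ Metric.ball (0:E3) R → w p = 0)
    (hbdd : ∀ p, ‖w p‖ ≤ C) :
    Integrable (fun p : E3 => (1 + ‖p‖ ^ 2) ^ s * ‖w p‖ ^ 2) := by
  have hC : 0 ≤ C := le_trans (norm_nonneg _) (hbdd 0)
  refine integrable_of_ball_support (C := (1 + R ^ 2) ^ s * C ^ 2) ?_ (R := R) ?_ ?_
  · refine (Continuous.aestronglyMeasurable ?_).mul ?_
    · exact (continuous_const.add ((continuous_norm).pow 2)).rpow_const
        fun _ => Or.inr hs.le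
    · exact ((hw.norm.pow_const 2).aestronglyMeasurable)
  · intro p hp
    rw [hsupp p hp]
    simp
  · intro p
    by_cases hp : p ∈ Metric.ball (0:E3) R
    · have hpR : ‖p‖ ≤ R := (mem_ball_zero_iff.1 hp).le
      have h1 : (1 + ‖p‖ ^ 2) ^ s ≤ (1 + R ^ 2) ^ s := by
        apply Real.rpow_le_rpow (by positivity) _ hs.le
        have : ‖p‖ ^ 2 ≤ R ^ 2 := by nlinarith [norm_nonneg p]
        linarith
      have h2 : ‖w p‖ ^ 2 ≤ C ^ 2 := by nlinarith [norm_nonneg (w p), hbdd p]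
      rw [Real.norm_eq_abs, abs_of_nonneg (by positivity)]
      exact mul_le_mul h1 h2 (by positivity) (by positivity)
    · rw [hsupp p hp]
      simp only [norm_zero]
      rw [Real.norm_eq_abs]
      norm_num
      positivity

private lemma key_setIntegral (s lam : ℝ) (hs : 0 < s) (hlam : 0 < lam)
    (v : E3 → ℂ) (hv : MemLp v 2 volume)
    (horth : ∀ w : E3 → ℂ,
      Integrable (fun p : E3 => (1 + ‖p‖ ^ 2) ^ s * ‖w p‖ ^ 2) →
      Integrable w →
      (∫ p : E3, w p) = 0 →
      (∫ p : E3, v p * ((‖p‖ ^ s + lam : ℝ) : ℂ) * w p) = 0)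
    {A : Set E3} (hA : MeasurableSet A) {R : ℝ} (hR : 0 < R)
    (hAR : A ⊆ Metric.ball 0 R) :
    ∫ p in A, v p * ((‖p‖ ^ s + lam : ℝ) : ℂ) =
      (((volume A).toReal : ℝ) : ℂ) * ((((volume (Metric.ball (0:E3) 1)).toReal : ℝ) : ℂ)⁻¹ *
        ∫ p in Metric.ball (0:E3) 1, v p * ((‖p‖ ^ s + lam : ℝ) : ℂ)) := by
  set B : Set E3 := Metric.ball 0 1 with hBdef
  have hB : MeasurableSet B := measurableSet_ball
  set a : ℝ := (volume A).toReal with ha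
  set b : ℝ := (volume B).toReal with hbdefn
  have hbpos : 0 < b := ENNReal.toReal_pos (Metric.measure_ball_pos volume (0:E3) one_pos).ne'
    measure_ball_lt_top.ne
  have hbne : (b : ℂ) ≠ 0 := by exact_mod_cast hbpos.ne'
  set d : ℂ := -((a : ℂ) / (b : ℂ)) with hd
  set w : E3 → ℂ := fun p => A.indicator (fun _ => (1:ℂ)) p + B.indicator (fun _ => d) p
    with hwdef
  have hR' : 0 ≤ max R 1 := le_trans zero_le_one (le_max_right _ _)
  have hAR' : A ⊆ Metric.ball (0:E3) (max R 1) :=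
    hAR.trans (Metric.ball_subset_ball (le_max_left _ _))
  have hBR' : B ⊆ Metric.ball (0:E3) (max R 1) :=
    Metric.ball_subset_ball (le_max_right _ _)
  have hwmeas : Measurable w :=
    (measurable_const.indicator hA).add (measurable_const.indicator hB)
  have hwsupp : ∀ p, p ∉ Metric.ball (0:E3) (max R 1) → w p = 0 := by
    intro p hp
    have h1 : p ∉ A := fun h => hp (hAR' h)
    have h2 : p ∉ B := fun h => hp (hBR' h)
    simp [hwdef, Set.indicator_of_notMem h1, Set.indicator_of_notMem h2]
  have hwbdd : ∀ p, ‖w p‖ ≤ 1 + ‖d‖ := by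
    intro p
    refine le_trans (norm_add_le _ _) (add_le_add ?_ ?_)
    · by_cases hp : p ∈ A <;>
        simp [Set.indicator_of_mem, Set.indicator_of_notMem, hp]
    · by_cases hp : p ∈ B <;>
        simp [Set.indicator_of_mem, Set.indicator_of_notMem, hp]
  have h1 : Integrable (fun p : E3 => (1 + ‖p‖ ^ 2) ^ s * ‖w p‖ ^ 2) :=
    weight_pkg hs hwmeas hR' hwsupp hwbdd
  have hiA : Integrable (A.indicator fun _ => (1:ℂ)) := indicator_pkg hs hA hAR 1
  have hiB : Integrable (B.indicator fun _ => d) :=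
    indicator_pkg hs hB (subset_refl _) d
  have h2 : Integrable w := hiA.add hiB
  have h3 : (∫ p : E3, w p) = 0 := by
    rw [hwdef]
    rw [integral_add hiA hiB, integral_indicator_const _ hA, integral_indicator_const _ hB]
    rw [Complex.real_smul, Complex.real_smul]
    change (a:ℂ) * 1 + (b:ℂ) * d = 0
    rw [hd]
    field_simp
    ring
  have h0 := horth w h1 h2 h3
  have hgA : IntegrableOn (fun p : E3 => v p * ((‖p‖ ^ s + lam : ℝ) : ℂ)) A volume :=
    integrableOn_g hs hlam v hv hA hAR
  have hgB : IntegrableOn (fun p : E3 => v p * ((‖p‖ ^ s + lam : ℝ) : ℂ)) B volume :=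
    integrableOn_g hs hlam v hv hB (subset_refl _)
  have hrw : (fun p : E3 => v p * ((‖p‖ ^ s + lam : ℝ) : ℂ) * w p) =
      fun p : E3 => A.indicator (fun q : E3 => v q * ((‖q‖ ^ s + lam : ℝ) : ℂ)) p
        + B.indicator (fun q : E3 => v q * ((‖q‖ ^ s + lam : ℝ) : ℂ) * d) p := by
    funext p
    by_cases hpA : p ∈ A <;> by_cases hpB : p ∈ B <;>
      simp [hwdef, Set.indicator_of_mem, Set.indicator_of_notMem, hpA, hpB] <;> ring
  rw [hrw] at h0
  have hIA : Integrable (A.indicator fun q : E3 => v q * ((‖q‖ ^ s + lam : ℝ) : ℂ)) :=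
    (integrable_indicator_iff hA).2 hgA
  have hIB : Integrable (B.indicator fun q : E3 => v q * ((‖q‖ ^ s + lam : ℝ) : ℂ) * d) :=
    (integrable_indicator_iff hB).2 (hgB.mul_const d)
  rw [integral_add hIA hIB, integral_indicator hA, integral_indicator hB,
    integral_mul_const] at h0
  rw [hd] at h0
  field_simp at h0 ⊢
  linear_combination h0

/-- For `s ∈ (3/2, 5/2)` and `λ > 0` (working on the Fourier side): if `v = û ∈ L²(ℝ³)`
satisfies `∫ v(p)(|p|^s+λ) w(p) dp = 0` for every `w = f̂` with `f ∈ H^s(ℝ³)` and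
`∫ w = 0`, then `v(p) = c/(|p|^s+λ)` (a.e.) for some constant `c ∈ ℂ`. That is, the
orthogonal complement of the range of `k̊^{(s/2)} + λ` is spanned by `G_{s,λ}`. -/
theorem orthogonal_complement_range_spanned_by_Green
    (s lam : ℝ) (hs : 3 / 2 < s) (hs' : s < 5 / 2) (hlam : 0 < lam)
    (v : EuclideanSpace ℝ (Fin 3) → ℂ) (hv : MemLp v 2 volume)
    (horth : ∀ w : EuclideanSpace ℝ (Fin 3) → ℂ,
      Integrable (fun p : EuclideanSpace ℝ (Fin 3) => (1 + ‖p‖ ^ 2) ^ s * ‖w p‖ ^ 2) →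
      Integrable w →
      (∫ p : EuclideanSpace ℝ (Fin 3), w p) = 0 →
      (∫ p : EuclideanSpace ℝ (Fin 3), v p * ((‖p‖ ^ s + lam : ℝ) : ℂ) * w p) = 0) :
    ∃ c : ℂ, ∀ᵐ p : EuclideanSpace ℝ (Fin 3) ∂volume,
      v p = c / ((‖p‖ ^ s + lam : ℝ) : ℂ) := by
  have hs0 : 0 < s := by linarith
  set c : ℂ := ((((volume (Metric.ball (0:E3) 1)).toReal : ℝ) : ℂ)⁻¹ *
      ∫ p in Metric.ball (0:E3) 1, v p * ((‖p‖ ^ s + lam : ℝ) : ℂ)) with hc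
  refine ⟨c, ?_⟩
  have hzero : ∀ (A : Set E3), MeasurableSet A → ∀ R : ℝ, 0 < R → A ⊆ Metric.ball 0 R →
      ∫ p in A, (v p * ((‖p‖ ^ s + lam : ℝ) : ℂ) - c) = 0 := by
    intro A hA R hRp hAR
    have hgA := integrableOn_g hs0 hlam v hv hA hAR
    have hAfin : volume A < ∞ := lt_of_le_of_lt (measure_mono hAR) measure_ball_lt_top
    rw [integral_sub hgA (integrableOn_const hAfin.ne)]
    rw [setIntegral_const, key_setIntegral s lam hs0 hlam v hv horth hA hRp hAR,
      Complex.real_smul, ← hc]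
    rw [Measure.real]
    ring
  have hball : ∀ n : ℕ, (fun p : E3 => v p * ((‖p‖ ^ s + lam : ℝ) : ℂ) - c)
      =ᵐ[volume.restrict (Metric.ball (0:E3) ((n:ℝ)+1))] 0 := by
    intro n
    have hn : (0:ℝ) < (n:ℝ) + 1 := by positivity
    haveI : Fact (volume (Metric.ball (0:E3) ((n:ℝ)+1)) < ∞) := ⟨measure_ball_lt_top⟩
    apply ae_eq_zero_of_forall_setIntegral_eq_of_sigmaFinite
    · intro t ht _
      rw [IntegrableOn, Measure.restrict_restrict ht]
      have hsub : t ∩ Metric.ball (0:E3) ((n:ℝ)+1) ⊆ Metric.ball 0 ((n:ℝ)+1) :=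
        Set.inter_subset_right
      exact (integrableOn_g hs0 hlam v hv (ht.inter measurableSet_ball) hsub).sub
        (integrableOn_const (lt_of_le_of_lt (measure_mono hsub)
          measure_ball_lt_top).ne)
    · intro t ht _
      rw [Measure.restrict_restrict ht]
      exact hzero _ (ht.inter measurableSet_ball) _ hn Set.inter_subset_right
  have hae : ∀ᵐ p : E3 ∂volume, v p * ((‖p‖ ^ s + lam : ℝ) : ℂ) - c = 0 := by
    rw [ae_iff]
    have hsub : {p : E3 | ¬(v p * ((‖p‖ ^ s + lam : ℝ) : ℂ) - c = 0)} ⊆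
        ⋃ n : ℕ, ({p : E3 | ¬(v p * ((‖p‖ ^ s + lam : ℝ) : ℂ) - c = 0)} ∩
          Metric.ball (0:E3) ((n:ℝ)+1)) := by
      intro p hp
      obtain ⟨n, hn⟩ := exists_nat_gt ‖p‖
      exact Set.mem_iUnion.2 ⟨n, hp, mem_ball_zero_iff.2 (by push_cast; linarith)⟩
    refine measure_mono_null hsub (measure_iUnion_null fun n => ?_)
    have h := hball n
    rw [Filter.EventuallyEq, ae_iff, Measure.restrict_apply' measurableSet_ball] at h
    simpa using h
  filter_upwards [hae] with p hp
  have hXpos : (0:ℝ) < ‖p‖ ^ s + lam := by positivity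
  have hXne : ((‖p‖ ^ s + lam : ℝ) : ℂ) ≠ 0 := Complex.ofReal_ne_zero.2 hXpos.ne'
  rw [eq_div_iff hXne]
  linear_combination hp

end GreenAux
end

section
/- Let s ∈ (1, 3/2) and λ > 0. Define G_{s,λ} on ℝ by Ĝ_{s,λ}(p) = (2π)^{−1/2}(|p|^s+λ)^{−1}. Then ‖G_{s,λ}‖²_{L²(ℝ)} / G_{s,λ}(0) = (s−1)/(λ s), where G_{s,λ}(0) = (λ^{1−1/s} s sin(π/s))^{−1} and ‖G_{s,λ}‖²_{L²(ℝ)} = (s−1)/(λ^{2−1/s} s² sin(π/s)). -/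
open MeasureTheory Real Set ENNReal

lemma aux_int_t {r a : ℝ} (ha : 0 < a) (hr : 0 < r) :
    IntegrableOn (fun t : ℝ => t ^ (a - 1) * Real.exp (-(r * t))) (Set.Ioi 0) := by
  have := integrableOn_rpow_mul_exp_neg_mul_rpow (p := 1) (s := a - 1) (b := r)
    (by linarith) zero_lt_one hr
  simpa [Real.rpow_one, neg_mul] using this

lemma key_integral (s lam a : ℝ) (hs : 1 < s) (ha : 1 ≤ a) (hlam : 0 < lam) :
    ∫ x in Ioi (0:ℝ), ((x ^ s + lam) ^ a)⁻¹ =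
      Gamma (1/s + 1) * Gamma (a - 1/s) / Gamma a * lam ^ (1/s - a) := by
  have hs0 : (0:ℝ) < s := by linarith
  have hinvs : 1/s < 1 := by rw [div_lt_one hs0]; linarith
  have hinvs0 : 0 < 1/s := by positivity
  have ha0 : (0:ℝ) < a := by linarith
  have has : 0 < a - 1/s := by linarith
  set C1 : ℝ := Gamma (1/s + 1) with hC1
  have hC1pos : 0 < C1 := Real.Gamma_pos_of_pos (by linarith)
  have hGa : 0 < Gamma a := Real.Gamma_pos_of_pos ha0
  have hG2 : 0 < Gamma (a - 1/s) := Real.Gamma_pos_of_pos has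
  -- the double integrand
  set F : ℝ → ℝ → ℝ≥0∞ := fun x t =>
    ENNReal.ofReal ((t ^ (a-1) * Real.exp (-(lam * t))) * Real.exp (-t * x ^ s)) with hF
  have hFmeas : Measurable (Function.uncurry F) := by
    apply ENNReal.measurable_ofReal.comp
    fun_prop
  -- Step 1 : pointwise identity on Ioi 0
  have step1 : ∀ x ∈ Ioi (0:ℝ), ENNReal.ofReal (((x ^ s + lam) ^ a)⁻¹)
      = ENNReal.ofReal (Gamma a)⁻¹ * ∫⁻ t in Ioi 0, F x t := by
    intro x hx
    have hx0 : (0:ℝ) < x := hx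
    have hrx : 0 < x ^ s + lam := by positivity
    have heq : ∀ t : ℝ, t ^ (a-1) * Real.exp (-(lam * t)) * Real.exp (-t * x ^ s)
        = t ^ (a-1) * Real.exp (-((x ^ s + lam) * t)) := by
      intro t
      rw [mul_assoc, ← Real.exp_add]
      ring_nf
    have hint : IntegrableOn (fun t : ℝ => t ^ (a-1) * Real.exp (-((x ^ s + lam) * t)))
        (Ioi 0) := aux_int_t ha0 hrx
    have : ∫⁻ t in Ioi 0, F x t
        = ENNReal.ofReal (∫ t in Ioi 0, t ^ (a-1) * Real.exp (-((x ^ s + lam) * t))) := by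
      rw [hF]; simp only [heq]
      rw [ofReal_integral_eq_lintegral_ofReal hint ((ae_restrict_iff' measurableSet_Ioi).mpr (ae_of_all _ fun t ht => by
        have : (0:ℝ) < t := ht; positivity))]
    rw [this, integral_rpow_mul_exp_neg_mul_Ioi ha0 hrx,
      ← ENNReal.ofReal_mul (by positivity)]
    congr 1
    rw [one_div, Real.inv_rpow hrx.le]
    field_simp
  -- Step 2 : inner integral over x, for fixed t
  have step2 : ∀ t ∈ Ioi (0:ℝ), ∫⁻ x in Ioi 0, F x t
      = ENNReal.ofReal (C1 * (t ^ (a - 1/s - 1) * Real.exp (-(lam * t)))) := by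
    intro t ht
    have ht0 : (0:ℝ) < t := ht
    have hint : IntegrableOn (fun x : ℝ => Real.exp (-t * x ^ s)) (Ioi 0) := by
      have := integrableOn_rpow_mul_exp_neg_mul_rpow (p := s) (s := 0) (b := t)
        (by norm_num) hs0 ht0
      simpa using this
    have : ∫⁻ x in Ioi 0, F x t
        = ENNReal.ofReal (∫ x in Ioi 0,
            (t ^ (a-1) * Real.exp (-(lam * t))) * Real.exp (-t * x ^ s)) := by
      rw [ofReal_integral_eq_lintegral_ofReal (hint.const_mul _)
        ((ae_restrict_iff' measurableSet_Ioi).mpr (ae_of_all _ fun x hx => by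
        have h0t : (0:ℝ) < t := ht0; positivity))]
    rw [this, MeasureTheory.integral_const_mul, integral_exp_neg_mul_rpow hs0 ht0]
    congr 1
    have ht' : t ^ (a-1) * t ^ (-1/s) = t ^ (a - 1/s - 1) := by
      rw [← Real.rpow_add ht0]; congr 1; ring
    rw [← ht']; ring
  -- assemble
  have hnn : 0 ≤ᵐ[volume.restrict (Ioi 0)] fun x : ℝ => ((x ^ s + lam) ^ a)⁻¹ :=
    (ae_restrict_iff' measurableSet_Ioi).mpr (ae_of_all _ fun x hx => by
      have : (0:ℝ) < x := hx; positivity)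
  have hmes : AEStronglyMeasurable (fun x : ℝ => ((x ^ s + lam) ^ a)⁻¹)
      (volume.restrict (Ioi 0)) := by
    apply Measurable.aestronglyMeasurable; fun_prop
  rw [integral_eq_lintegral_of_nonneg_ae hnn hmes]
  have calc1 : ∫⁻ x in Ioi 0, ENNReal.ofReal (((x ^ s + lam) ^ a)⁻¹)
      = ENNReal.ofReal (Gamma a)⁻¹ * ∫⁻ t in Ioi 0, ∫⁻ x in Ioi 0, F x t := by
    rw [setLIntegral_congr_fun_ae measurableSet_Ioi (ae_of_all _ step1),
      lintegral_const_mul' _ _ ENNReal.ofReal_ne_top]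
    congr 1
    exact lintegral_lintegral_swap hFmeas.aemeasurable
  have hint2 : IntegrableOn
      (fun t : ℝ => C1 * (t ^ (a - 1/s - 1) * Real.exp (-(lam * t)))) (Ioi 0) := by
    have := (aux_int_t has hlam).const_mul C1
    simpa [IntegrableOn, mul_comm, mul_assoc, mul_left_comm, sub_sub] using this
  have calc2 : ∫⁻ t in Ioi 0, ∫⁻ x in Ioi 0, F x t
      = ENNReal.ofReal (C1 * ((1/lam) ^ (a - 1/s) * Gamma (a - 1/s))) := by
    rw [setLIntegral_congr_fun_ae measurableSet_Ioi (ae_of_all _ step2),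
      ← ofReal_integral_eq_lintegral_ofReal hint2
        ((ae_restrict_iff' measurableSet_Ioi).mpr (ae_of_all _ fun t ht => by
          have : (0:ℝ) < t := ht; positivity))]
    congr 1
    rw [MeasureTheory.integral_const_mul]
    congr 1
    have := integral_rpow_mul_exp_neg_mul_Ioi has hlam
    simpa [sub_sub] using this
  rw [calc1, calc2, ← ENNReal.ofReal_mul (by positivity),
    ENNReal.toReal_ofReal (by positivity)]
  have hpow : (1/lam) ^ (a - 1/s) = lam ^ (1/s - a) := by
    rw [one_div, Real.inv_rpow hlam.le, ← Real.rpow_neg hlam.le]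
    congr 1; ring
  rw [hpow, div_eq_mul_inv]
  ring

/-- For `s ∈ (1, 3/2)` and `λ > 0`, with `Ĝ_{s,λ}(p) = (2π)^{−1/2}(|p|^s+λ)^{−1}` on `ℝ`:
`G_{s,λ}(0) = (2π)^{−1}∫(|p|^s+λ)^{−1}dp = (λ^{1−1/s} s sin(π/s))^{−1}`,
`‖G_{s,λ}‖²_{L²} = (2π)^{−1}∫(|p|^s+λ)^{−2}dp = (s−1)/(λ^{2−1/s} s² sin(π/s))`, and
their ratio `‖G_{s,λ}‖²_{L²}/G_{s,λ}(0)` equals `(s−1)/(λ s)`. -/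
theorem Gslam_norm_sq_div_value_at_zero (s lam : ℝ)
    (hs : 1 < s) (hs' : s < 3 / 2) (hlam : 0 < lam) :
    ((2 * π)⁻¹ * ∫ p : ℝ, (|p| ^ s + lam)⁻¹ =
        (lam ^ (1 - 1 / s) * s * Real.sin (π / s))⁻¹) ∧
    ((2 * π)⁻¹ * ∫ p : ℝ, ((|p| ^ s + lam) ^ 2)⁻¹ =
        (s - 1) / (lam ^ (2 - 1 / s) * s ^ 2 * Real.sin (π / s))) ∧
    ((2 * π)⁻¹ * ∫ p : ℝ, ((|p| ^ s + lam) ^ 2)⁻¹) /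
        ((2 * π)⁻¹ * ∫ p : ℝ, (|p| ^ s + lam)⁻¹) = (s - 1) / (lam * s) := by
  have hs0 : (0:ℝ) < s := by linarith
  have hinvs : 1/s < 1 := by rw [div_lt_one hs0]; linarith
  have hinvs0 : 0 < 1/s := by positivity
  have hS : 0 < Real.sin (π / s) :=
    Real.sin_pos_of_pos_of_lt_pi (by positivity) (div_lt_self Real.pi_pos hs)
  have key1 : Gamma (1/s + 1) * Gamma (1 - 1/s) / Gamma 1 = π / (s * Real.sin (π / s)) := by
    rw [Real.Gamma_add_one hinvs0.ne', Real.Gamma_one, div_one, mul_assoc,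
      Real.Gamma_mul_Gamma_one_sub, mul_one_div π s]
    field_simp
  have key2 : Gamma (1/s + 1) * Gamma (2 - 1/s) / Gamma 2
      = (s - 1) * π / (s^2 * Real.sin (π / s)) := by
    rw [show (2:ℝ) - 1/s = (1 - 1/s) + 1 by ring,
      Real.Gamma_add_one (s := 1 - 1/s) (by intro h; rw [sub_eq_zero] at h; exact absurd h.symm (ne_of_lt hinvs)),
      Real.Gamma_add_one hinvs0.ne', Real.Gamma_two, div_one,
      show 1/s * Gamma (1/s) * ((1 - 1/s) * Gamma (1 - 1/s))
        = 1/s * (1 - 1/s) * (Gamma (1/s) * Gamma (1 - 1/s)) by ring,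
      Real.Gamma_mul_Gamma_one_sub, mul_one_div π s]
    field_simp [hS.ne', hs0.ne']
  have k1 := key_integral s lam 1 hs le_rfl hlam
  have k2 := key_integral s lam 2 hs one_le_two hlam
  simp only [Real.rpow_one] at k1
  rw [key1] at k1
  rw [key2] at k2
  simp only [show ∀ r : ℝ, r ^ (2:ℝ) = r ^ (2:ℕ) from fun r => by
    rw [← Real.rpow_natCast r 2]; norm_num] at k2
  have e1 : ∫ p : ℝ, (|p| ^ s + lam)⁻¹ = 2 * ∫ x in Ioi (0:ℝ), (x ^ s + lam)⁻¹ :=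
    integral_comp_abs (f := fun x => (x ^ s + lam)⁻¹)
  have e2 : ∫ p : ℝ, ((|p| ^ s + lam) ^ 2)⁻¹
      = 2 * ∫ x in Ioi (0:ℝ), ((x ^ s + lam) ^ 2)⁻¹ :=
    integral_comp_abs (f := fun x => ((x ^ s + lam) ^ 2)⁻¹)
  have hl1 : lam ^ ((1:ℝ)/s - 1) = (lam ^ (1 - 1/s))⁻¹ := by
    rw [← Real.rpow_neg hlam.le]; congr 1; ring
  have hl2 : lam ^ ((1:ℝ)/s - 2) = (lam ^ (2 - 1/s))⁻¹ := by
    rw [← Real.rpow_neg hlam.le]; congr 1; ring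
  have hP : (0:ℝ) < lam ^ (1 - 1/s) := Real.rpow_pos_of_pos hlam _
  have hQ : (0:ℝ) < lam ^ (2 - 1/s) := Real.rpow_pos_of_pos hlam _
  have hQP : lam ^ (2 - 1/s) = lam * lam ^ (1 - 1/s) := by
    rw [show (2:ℝ) - 1/s = 1 + (1 - 1/s) by ring, Real.rpow_add hlam, Real.rpow_one]
  have c1 : (2 * π)⁻¹ * ∫ p : ℝ, (|p| ^ s + lam)⁻¹
      = (lam ^ (1 - 1/s) * s * Real.sin (π / s))⁻¹ := by
    rw [e1, k1, hl1]
    field_simp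
  have c2 : (2 * π)⁻¹ * ∫ p : ℝ, ((|p| ^ s + lam) ^ 2)⁻¹
      = (s - 1) / (lam ^ (2 - 1/s) * s ^ 2 * Real.sin (π / s)) := by
    rw [e2, k2, hl2]
    field_simp
  refine ⟨c1, c2, ?_⟩
  rw [c1, c2, hQP]
  field_simp
end

section
/- For s ∈ (1/2, 1) and λ > 0, the function h_{s,λ} with Fourier transform (|p|^s+λ)^{−2} belongs to H^s(ℝ) and satisfies ∫_ℝ (|p|^s+λ)^{−2} dp = 2π(s−1)/(λ^{2−1/s} s² sin(π/s)) > 0; note sin(π/s) < 0 and s − 1 < 0 for s ∈ (1/2,1), so the stated value is positive. -/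
open MeasureTheory Real

open Set in
private lemma hslam_max_bound {s lam x : ℝ} (hs0 : 0 < s) (hlam : 0 < lam)
    (hx : 0 ≤ x) : (1 + x) ^ s ≤ 2 ^ s * max 1 lam⁻¹ * (x ^ s + lam) := by
  have hxs : (0:ℝ) ≤ x ^ s := rpow_nonneg hx s
  have hM1 : (1:ℝ) ≤ max 1 lam⁻¹ := le_max_left _ _
  have hM2 : lam⁻¹ ≤ max 1 lam⁻¹ := le_max_right _ _
  have step1 : (1 + x) ^ s ≤ (2 * max 1 x) ^ s := by
    apply rpow_le_rpow (by linarith) ?_ hs0.le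
    have := le_max_left (1:ℝ) x
    have := le_max_right (1:ℝ) x
    linarith
  have step2 : (2 * max 1 x) ^ s = 2 ^ s * (max 1 x) ^ s := by
    rw [mul_rpow (by norm_num) (le_max_of_le_left zero_le_one)]
  have step3 : (max 1 x) ^ s ≤ max 1 lam⁻¹ * (x ^ s + lam) := by
    rcases le_total x 1 with h | h
    · rw [max_eq_left h, one_rpow]
      calc (1:ℝ) = lam⁻¹ * lam := by field_simp
        _ ≤ max 1 lam⁻¹ * (x ^ s + lam) :=
            mul_le_mul hM2 (by linarith) hlam.le (by linarith)
    · rw [max_eq_right h]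
      have h1 : (1:ℝ) ≤ x ^ s := by
        have := rpow_le_rpow (by norm_num) h hs0.le
        rwa [one_rpow] at this
      calc x ^ s ≤ 1 * (x ^ s + lam) := by linarith
        _ ≤ max 1 lam⁻¹ * (x ^ s + lam) := by
            apply mul_le_mul_of_nonneg_right hM1 (by linarith)
  calc (1 + x) ^ s ≤ 2 ^ s * (max 1 x) ^ s := step2 ▸ step1
    _ ≤ 2 ^ s * (max 1 lam⁻¹ * (x ^ s + lam)) := by
        apply mul_le_mul_of_nonneg_left step3 (by positivity)
    _ = 2 ^ s * max 1 lam⁻¹ * (x ^ s + lam) := by ring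

private lemma hslam_key_ineq {s lam x : ℝ} (hs0 : 0 < s) (hlam : 0 < lam)
    (hx : 0 ≤ x) :
    ((x ^ s + lam) ^ 2)⁻¹ ≤ (2 ^ s * max 1 lam⁻¹) ^ 2 * (1 + x ^ 2) ^ (-s) := by
  have hxs : (0:ℝ) ≤ x ^ s := rpow_nonneg hx s
  set C : ℝ := 2 ^ s * max 1 lam⁻¹ with hC
  have hCpos : 0 < C := by positivity
  have H : (1 + x ^ 2) ^ s ≤ C ^ 2 * (x ^ s + lam) ^ 2 := by
    have h1 : (1 + x ^ 2) ^ s ≤ ((1 + x) ^ 2) ^ s := by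
      apply rpow_le_rpow (by positivity) (by nlinarith) hs0.le
    have h2 : ((1 + x) ^ 2) ^ s = ((1 + x) ^ s) ^ 2 := by
      rw [← rpow_natCast (1 + x) 2, ← rpow_natCast ((1 + x) ^ s) 2,
        ← rpow_mul (by linarith), ← rpow_mul (by linarith), mul_comm]
    have h3 : ((1 + x) ^ s) ^ 2 ≤ (C * (x ^ s + lam)) ^ 2 := by
      apply pow_le_pow_left₀ (rpow_nonneg (by linarith) s)
      exact hslam_max_bound hs0 hlam hx
    calc (1 + x ^ 2) ^ s ≤ ((1 + x) ^ s) ^ 2 := h2 ▸ h1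
      _ ≤ (C * (x ^ s + lam)) ^ 2 := h3
      _ = C ^ 2 * (x ^ s + lam) ^ 2 := by ring
  have hpos1 : (0:ℝ) < (x ^ s + lam) ^ 2 := by positivity
  have hpos2 : (0:ℝ) < (1 + x ^ 2) ^ s := by positivity
  rw [rpow_neg (by positivity)]
  calc ((x ^ s + lam) ^ 2)⁻¹ = C ^ 2 * (C ^ 2 * (x ^ s + lam) ^ 2)⁻¹ := by
        field_simp
    _ ≤ C ^ 2 * ((1 + x ^ 2) ^ s)⁻¹ := by
        gcongr

private lemma hslam_base_int {s : ℝ} (hs : 1 / 2 < s) :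
    Integrable (fun x : ℝ => (1 + x ^ 2) ^ (-s)) := by
  have h := integrable_rpow_neg_one_add_norm_sq (E := ℝ) (μ := volume) (r := 2 * s)
    (by simp [Module.finrank_self]; linarith)
  have heq : ∀ x : ℝ, ((1:ℝ) + ‖x‖ ^ 2) ^ (-(2 * s) / 2) = (1 + x ^ 2) ^ (-s) := by
    intro x
    rw [Real.norm_eq_abs, sq_abs, show -(2 * s) / 2 = -s by ring]
  simpa only [heq] using h

open Set in
private lemma hslam_intOnA {s lam : ℝ} (hs : 1 / 2 < s) (hs1 : s < 1) (hlam : 0 < lam) :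
    IntegrableOn (fun x : ℝ => ((x ^ s + lam) ^ 2)⁻¹) (Ioi 0) := by
  have hs0 : 0 < s := by linarith
  refine Integrable.mono'
    (((hslam_base_int hs).const_mul ((2 ^ s * max 1 lam⁻¹) ^ 2)).integrableOn)
    ((by fun_prop : Measurable fun x : ℝ => ((x ^ s + lam) ^ 2)⁻¹).aestronglyMeasurable) ?_
  filter_upwards [ae_restrict_mem measurableSet_Ioi] with x hx
  have hxs : (0:ℝ) ≤ x ^ s := rpow_nonneg (le_of_lt hx) s
  rw [Real.norm_eq_abs, abs_of_nonneg (by positivity)]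
  exact hslam_key_ineq hs0 hlam (le_of_lt hx)

private lemma hslam_intB {s lam : ℝ} (hs : 1 / 2 < s) (hs1 : s < 1) (hlam : 0 < lam) :
    Integrable (fun p : ℝ => (1 + p ^ 2) ^ s * (((|p| ^ s + lam) ^ 2)⁻¹) ^ 2) := by
  have hs0 : 0 < s := by linarith
  set C : ℝ := 2 ^ s * max 1 lam⁻¹ with hC
  have hCpos : 0 < C := by positivity
  refine Integrable.mono' ((hslam_base_int hs).const_mul (C ^ 4))
    ((by fun_prop : Measurable fun p : ℝ =>
      (1 + p ^ 2) ^ s * (((|p| ^ s + lam) ^ 2)⁻¹) ^ 2).aestronglyMeasurable) ?_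
  refine Filter.Eventually.of_forall fun p => ?_
  have hp2 : (0:ℝ) < 1 + p ^ 2 := by positivity
  have hxs : (0:ℝ) ≤ |p| ^ s := rpow_nonneg (abs_nonneg p) s
  have hkey : ((|p| ^ s + lam) ^ 2)⁻¹ ≤ C ^ 2 * (1 + p ^ 2) ^ (-s) := by
    have := hslam_key_ineq hs0 hlam (abs_nonneg p)
    rwa [sq_abs] at this
  rw [Real.norm_eq_abs, abs_of_nonneg (by positivity)]
  calc (1 + p ^ 2) ^ s * (((|p| ^ s + lam) ^ 2)⁻¹) ^ 2
      ≤ (1 + p ^ 2) ^ s * (C ^ 2 * (1 + p ^ 2) ^ (-s)) ^ 2 := by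
        apply mul_le_mul_of_nonneg_left _ (by positivity)
        apply pow_le_pow_left₀ (by positivity) hkey
    _ = C ^ 4 * ((1 + p ^ 2) ^ s * ((1 + p ^ 2) ^ (-s) * (1 + p ^ 2) ^ (-s))) := by ring
    _ = C ^ 4 * (1 + p ^ 2) ^ (-s) := by
        rw [← rpow_add hp2, ← rpow_add hp2]
        norm_num

open Set in
private lemma hslam_inv_sq_eq {r : ℝ} (hr : 0 < r) :
    ((r ^ 2)⁻¹ : ℝ) = ∫ t in Ioi (0:ℝ), t * Real.exp (-(r * t)) := by
  have h := integral_rpow_mul_exp_neg_mul_Ioi (a := 2) (r := r) two_pos hr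
  have h2 : ((1:ℝ) / r) ^ (2:ℝ) = (r ^ 2)⁻¹ := by
    rw [show (2:ℝ) = ((2:ℕ):ℝ) by norm_num, rpow_natCast, div_pow, one_pow, one_div]
  rw [show (2:ℝ) - 1 = 1 by norm_num] at h
  simp only [rpow_one, Real.Gamma_two, mul_one, h2] at h
  exact h.symm

open Set in
private lemma hslam_integral_value {s lam : ℝ} (hs : 1 / 2 < s) (hs1 : s < 1) (hlam : 0 < lam) :
    ∫ x in Ioi (0:ℝ), ((x ^ s + lam) ^ 2)⁻¹ =
      Real.Gamma (1 / s + 1) * ((1 / lam) ^ (2 - 1 / s) * Real.Gamma (2 - 1 / s)) := by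
  have hs0 : 0 < s := by linarith
  set F : ℝ → ℝ → ℝ := fun x t => t * Real.exp (-((x ^ s + lam) * t)) with hF
  have hmeas : AEStronglyMeasurable (Function.uncurry F)
      ((volume.restrict (Ioi 0)).prod (volume.restrict (Ioi 0))) := by
    apply Measurable.aestronglyMeasurable
    fun_prop
  have hsec : ∀ x : ℝ, 0 < x → Integrable (fun t => F x t) (volume.restrict (Ioi 0)) := by
    intro x hx
    have hr : 0 < x ^ s + lam := by
      have := rpow_nonneg hx.le s; linarith
    have h := integrableOn_rpow_mul_exp_neg_mul_rpow (p := 1) (s := 1) (b := x ^ s + lam)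
      (by norm_num) one_pos hr
    have heq : (fun t : ℝ => F x t) =
        fun t : ℝ => t ^ (1:ℝ) * Real.exp (-(x ^ s + lam) * t ^ (1:ℝ)) := by
      funext t; rw [hF]; rw [rpow_one, neg_mul]
    rw [heq]; exact h
  have hval : ∀ x : ℝ, 0 < x →
      (∫ t in Ioi (0:ℝ), F x t) = ((x ^ s + lam) ^ 2)⁻¹ := by
    intro x hx
    have hr : 0 < x ^ s + lam := by
      have := rpow_nonneg hx.le s; linarith
    exact (hslam_inv_sq_eq hr).symm
  have hint : Integrable (Function.uncurry F)
      ((volume.restrict (Ioi 0)).prod (volume.restrict (Ioi 0))) := by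
    rw [integrable_prod_iff hmeas]
    constructor
    · filter_upwards [ae_restrict_mem measurableSet_Ioi] with x hx
      exact hsec x hx
    · apply (hslam_intOnA hs hs1 hlam).congr
      filter_upwards [ae_restrict_mem measurableSet_Ioi] with x hx
      simp only [Function.uncurry_apply_pair]
      have : (∫ t in Ioi (0:ℝ), ‖F x t‖) = ∫ t in Ioi (0:ℝ), F x t := by
        refine setIntegral_congr_fun measurableSet_Ioi fun t ht => ?_
        exact norm_of_nonneg (mul_nonneg (le_of_lt ht) (Real.exp_pos _).le)
      rw [this, hval x hx]
  have swap := MeasureTheory.integral_integral_swap hint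
  have lhs_eq : ∫ x in Ioi (0:ℝ), ((x ^ s + lam) ^ 2)⁻¹ =
      ∫ x in Ioi (0:ℝ), ∫ t in Ioi (0:ℝ), F x t := by
    refine setIntegral_congr_fun measurableSet_Ioi fun x hx => ?_
    exact (hval x hx).symm
  rw [lhs_eq, swap]
  have inner : ∀ t : ℝ, 0 < t → (∫ x in Ioi (0:ℝ), F x t) =
      Real.Gamma (1 / s + 1) * (t ^ ((2 - 1 / s) - 1) * Real.exp (-(lam * t))) := by
    intro t ht
    have e1 : ∀ x : ℝ, F x t = (t * Real.exp (-(lam * t))) * Real.exp (-t * x ^ s) := by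
      intro x
      show t * Real.exp (-((x ^ s + lam) * t)) = _
      rw [mul_assoc, ← Real.exp_add]
      congr 1
      ring
    simp only [e1]
    rw [integral_const_mul, integral_exp_neg_mul_rpow hs0 ht]
    have ht1 : t ^ (1:ℝ) = t := rpow_one t
    have : t * Real.exp (-(lam * t)) * (t ^ (-1 / s) * Real.Gamma (1 / s + 1)) =
        Real.Gamma (1 / s + 1) * ((t ^ (1:ℝ) * t ^ (-1 / s)) * Real.exp (-(lam * t))) := by
      rw [ht1]; ring
    rw [this, ← rpow_add ht]
    congr 2
    ring
  have outer_eq : ∫ t in Ioi (0:ℝ), ∫ x in Ioi (0:ℝ), F x t =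
      ∫ t in Ioi (0:ℝ),
        Real.Gamma (1 / s + 1) * (t ^ ((2 - 1 / s) - 1) * Real.exp (-(lam * t))) := by
    refine setIntegral_congr_fun measurableSet_Ioi fun t ht => inner t ht
  rw [outer_eq, integral_const_mul,
    integral_rpow_mul_exp_neg_mul_Ioi (by rw [sub_pos, div_lt_iff₀ hs0]; linarith) hlam]

/-- For `s ∈ (1/2, 1)` and `λ > 0`, the function `h_{s,λ}` with Fourier transform
`(|p|^s+λ)^{−2}` belongs to `H^s(ℝ)`, i.e. `∫ (1+p²)^s (|p|^s+λ)^{−4} dp < ∞`, and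
`∫_ℝ (|p|^s+λ)^{−2} dp = 2π(s−1)/(λ^{2−1/s} s² sin(π/s))`, a positive quantity since
`sin(π/s) < 0` and `s − 1 < 0` for `s ∈ (1/2, 1)`. -/
theorem hslam_memHs_and_integral (s lam : ℝ)
    (hs : 1 / 2 < s) (hs1 : s < 1) (hlam : 0 < lam) :
    Integrable (fun p : ℝ => (1 + p ^ 2) ^ s * (((|p| ^ s + lam) ^ 2)⁻¹) ^ 2) ∧
    (∫ p : ℝ, ((|p| ^ s + lam) ^ 2)⁻¹ =
      2 * π * (s - 1) / (lam ^ (2 - 1 / s) * s ^ 2 * Real.sin (π / s))) ∧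
    0 < 2 * π * (s - 1) / (lam ^ (2 - 1 / s) * s ^ 2 * Real.sin (π / s)) := by
  have hs0 : 0 < s := by linarith
  have hpi := Real.pi_pos
  have h1 : π < π / s := by
    rw [lt_div_iff₀ hs0]; nlinarith
  have h2 : π / s < 2 * π := by
    rw [div_lt_iff₀ hs0]; nlinarith
  have hsin : Real.sin (π / s) < 0 := by
    have hpos := Real.sin_pos_of_pos_of_lt_pi (x := π / s - π) (by linarith) (by linarith)
    have heq := Real.sin_add_pi (π / s - π)
    rw [sub_add_cancel] at heq
    linarith
  have hlr : (0:ℝ) < lam ^ (2 - 1 / s) := Real.rpow_pos_of_pos hlam _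
  refine ⟨hslam_intB hs hs1 hlam, ?_, ?_⟩
  · have habs : (∫ p : ℝ, ((|p| ^ s + lam) ^ 2)⁻¹) =
        2 * ∫ x in Set.Ioi (0:ℝ), ((x ^ s + lam) ^ 2)⁻¹ :=
      integral_comp_abs (f := fun x => ((x ^ s + lam) ^ 2)⁻¹)
    rw [habs, hslam_integral_value hs hs1 hlam]
    have hG1 : Real.Gamma (1 / s + 1) = (1 / s) * Real.Gamma (1 / s) :=
      Real.Gamma_add_one (by positivity)
    have hinvs : 1 < 1 / s := by rw [lt_div_iff₀ hs0]; linarith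
    have hG2 : Real.Gamma (2 - 1 / s) = (1 - 1 / s) * Real.Gamma (1 - 1 / s) := by
      rw [show (2 : ℝ) - 1 / s = (1 - 1 / s) + 1 by ring,
        Real.Gamma_add_one (by intro h; rw [sub_eq_zero] at h; linarith)]
    have hrefl : Real.Gamma (1 / s) * Real.Gamma (1 - 1 / s) = π / Real.sin (π * (1 / s)) :=
      Real.Gamma_mul_Gamma_one_sub (1 / s)
    have hlamp : (1 / lam) ^ (2 - 1 / s) = (lam ^ (2 - 1 / s))⁻¹ := by
      rw [one_div, Real.inv_rpow hlam.le]
    rw [hG1, hG2, hlamp]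
    rw [show π * (1 / s) = π / s by ring] at hrefl
    have hsne : Real.sin (π / s) ≠ 0 := ne_of_lt hsin
    set A := lam ^ (2 - 1 / s) with hA
    set σ := Real.sin (π / s) with hσ
    have hAne : A ≠ 0 := ne_of_gt hlr
    calc 2 * (1 / s * Real.Gamma (1 / s) * (A⁻¹ * ((1 - 1 / s) * Real.Gamma (1 - 1 / s))))
        = 2 * (1 / s) * (1 - 1 / s) * A⁻¹ * (Real.Gamma (1 / s) * Real.Gamma (1 - 1 / s)) := by
          ring
      _ = 2 * (1 / s) * (1 - 1 / s) * A⁻¹ * (π / σ) := by rw [hrefl]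
      _ = 2 * π * (s - 1) / (A * s ^ 2 * σ) := by
          field_simp
  · apply div_pos_of_neg_of_neg
    · nlinarith
    · have hden : (0:ℝ) < lam ^ (2 - 1 / s) * s ^ 2 := by positivity
      nlinarith
end
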